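/- arXiv:1404.5730 — 9 statements merged into one kernel-verified Lean document; each statement's English description precedes it below -/
import Mathlib

section
/- Let F be a long-tailed distribution function on ℝ. Then there exists a function d : [0,∞) → (0,∞) such that lim_{u→∞} d(u) = ∞, lim_{u→∞} d(u)/u = 0, lim_{u→∞} (1−F(u+d(u)))/(1−F(u)) = 1, and lim_{u→∞} (1−F(u−d(u)))/(1−F(u)) = 1. -/
open Filter Set

/-- A distribution function on `ℝ`: monotone, right-continuous, with limits `0` at `-∞`
and `1` at `+∞`. -/
def IsDistributionFunction (F : ℝ → ℝ) : Prop :=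
  Monotone F ∧ (∀ x : ℝ, ContinuousWithinAt F (Set.Ici x) x) ∧
    Tendsto F atBot (nhds 0) ∧ Tendsto F atTop (nhds 1)

/-- A distribution function `F` is long-tailed if `1 - F(u) > 0` for all `u` and
`(1 - F(x+y))/(1 - F(x)) → 1` as `x → ∞`, for every `y`. -/
def LongTailed (F : ℝ → ℝ) : Prop :=
  (∀ u : ℝ, 0 < 1 - F u) ∧
    ∀ y : ℝ, Tendsto (fun x => (1 - F (x + y)) / (1 - F x)) atTop (nhds 1)

/-!
Long-tailedness gives, for every fixed shift `n`, a threshold beyond which the ratios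
`(1 - F (u ± n)) / (1 - F u)` are within `1 / n` of `1`. Letting the shift grow slowly enough
with `u` that these thresholds (and the threshold `n ^ 2 ≤ u`) are always passed, one gets a
shift `d u → ∞` with `d u ≤ √u`, along which the ratios still tend to `1`.
-/

theorem exists_tendsto_atTop_eventually_diag {P : ℕ → ℝ → Prop}
    (hP : ∀ n, ∀ᶠ x in atTop, P n x) :
    ∃ N : ℝ → ℕ, Tendsto N atTop atTop ∧ ∀ᶠ x in atTop, P (N x) x := by
  choose B hB using fun n => eventually_atTop.mp (hP n)
  -- `a n ≥ n` keeps the search for the last passed threshold below `⌈x⌉₊`.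
  set a : ℕ → ℝ := fun n => max (B n) n
  have passed_le_ceil {n : ℕ} {x : ℝ} (hx : a n ≤ x) : n ≤ ⌈x⌉₊ :=
    Nat.cast_le.mp (((le_max_right _ _).trans hx).trans (Nat.le_ceil x))
  set N : ℝ → ℕ := fun x => Nat.findGreatest (fun n => a n ≤ x) ⌈x⌉₊
  refine ⟨N, tendsto_atTop.mpr fun n => ?_, ?_⟩
  · filter_upwards [eventually_ge_atTop (a n)] with x hx
    exact Nat.le_findGreatest (passed_le_ceil hx) hx
  · filter_upwards [eventually_ge_atTop (a 0)] with x hx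
    have hNx : a (N x) ≤ x :=
      Nat.findGreatest_spec (P := fun n => a n ≤ x) (passed_le_ceil hx) hx
    exact hB _ _ ((le_max_left _ _).trans hNx)

theorem tendsto_of_dist_le_one_div_succ {α X : Type*} [PseudoMetricSpace X] {l : Filter α}
    {f : α → X} {c : X} {N : α → ℕ} (hN : Tendsto N l atTop)
    (h : ∀ᶠ x in l, dist (f x) c ≤ 1 / ((N x : ℝ) + 1)) : Tendsto f l (nhds c) :=
  tendsto_iff_dist_tendsto_zero.mpr <|
    squeeze_zero' (Eventually.of_forall fun _ => dist_nonneg) h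
      (tendsto_one_div_add_atTop_nhds_zero_nat.comp hN)

theorem div_le_one_div_of_sq_le {d u : ℝ} (hd : 0 < d) (hu : d ^ 2 ≤ u) : d / u ≤ 1 / d := by
  rw [div_le_div_iff₀ ((pow_pos hd 2).trans_le hu) hd]
  nlinarith

theorem stmt2_general (F : ℝ → ℝ) (hlt : LongTailed F) :
    ∃ d : ℝ → ℝ, (∀ u : ℝ, 0 ≤ u → 0 < d u) ∧
      Tendsto d atTop atTop ∧
      Tendsto (fun u => d u / u) atTop (nhds 0) ∧
      Tendsto (fun u => (1 - F (u + d u)) / (1 - F u)) atTop (nhds 1) ∧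
      Tendsto (fun u => (1 - F (u - d u)) / (1 - F u)) atTop (nhds 1) := by
  obtain ⟨-, hratio⟩ := hlt
  have hP (n : ℕ) : ∀ᶠ u in atTop,
      dist ((1 - F (u + (n + 1))) / (1 - F u)) 1 ≤ 1 / ((n : ℝ) + 1) ∧
      dist ((1 - F (u - (n + 1))) / (1 - F u)) 1 ≤ 1 / ((n : ℝ) + 1) ∧
      ((n : ℝ) + 1) ^ 2 ≤ u := by
    have hε : (0 : ℝ) < 1 / ((n : ℝ) + 1) := by positivity
    filter_upwards [Metric.tendsto_nhds.mp (hratio (n + 1)) _ hε,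
      Metric.tendsto_nhds.mp (hratio (-(n + 1))) _ hε,
      eventually_ge_atTop (((n : ℝ) + 1) ^ 2)] with u hplus hminus hsq
    exact ⟨hplus.le, by simpa only [← sub_eq_add_neg] using hminus.le, hsq⟩
  obtain ⟨N, hN, hPN⟩ := exists_tendsto_atTop_eventually_diag hP
  refine ⟨fun u => N u + 1, fun u _ => by positivity,
    tendsto_atTop_add_const_right _ 1 (tendsto_natCast_atTop_atTop.comp hN), ?_,
    tendsto_of_dist_le_one_div_succ hN (hPN.mono fun _ h => h.1),
    tendsto_of_dist_le_one_div_succ hN (hPN.mono fun _ h => h.2.1)⟩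
  refine tendsto_of_dist_le_one_div_succ hN ?_
  filter_upwards [hPN] with u ⟨_, _, hsq⟩
  have hd : (0 : ℝ) < N u + 1 := by positivity
  have hu : 0 < u := (pow_pos hd 2).trans_le hsq
  rw [Real.dist_eq, sub_zero, abs_of_pos (div_pos hd hu)]
  exact div_le_one_div_of_sq_le hd hsq

/-- for a long-tailed distribution function `F`, there is a function
`d : [0,∞) → (0,∞)` with `d(u) → ∞`, `d(u)/u → 0`, and
`1 - F(u ± d(u)) ∼ 1 - F(u)` as `u → ∞`. -/
theorem stmt2 (F : ℝ → ℝ) (hdf : IsDistributionFunction F) (hlt : LongTailed F) :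
    ∃ d : ℝ → ℝ, (∀ u : ℝ, 0 ≤ u → 0 < d u) ∧
      Tendsto d atTop atTop ∧
      Tendsto (fun u => d u / u) atTop (nhds 0) ∧
      Tendsto (fun u => (1 - F (u + d u)) / (1 - F u)) atTop (nhds 1) ∧
      Tendsto (fun u => (1 - F (u - d u)) / (1 - F u)) atTop (nhds 1) :=
  stmt2_general F hlt
end

section
/- Fix T > 0, K ∈ (0,1], and H ∈ (0,1). Define R(t,s) = 2^{−K}((t^{2H}+s^{2H})^K − |t−s|^{2KH}) for s,t > 0 (the bifractional Brownian motion covariance, whose variance at time t is t^{2KH}). Then, as min(s,t) → T: 1 − R(t,s)/(t^{KH} s^{KH}) = 2^{−K} T^{−2KH} |t−s|^{2KH} + o(|t−s|^{2KH}); precisely, for every ε > 0 there exists δ > 0 such that for all s, t ∈ (T−δ, T] with s ≠ t, |(1 − R(t,s)/(t^{KH} s^{KH}))/|t−s|^{2KH} − 2^{−K} T^{−2KH}| ≤ ε. -/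
open Filter Set

set_option maxHeartbeats 2000000 in
private lemma bifbm_core (T K H ε δ : ℝ) (hT : 0 < T) (hK0 : 0 < K) (hK1 : K ≤ 1)
    (hH0 : 0 < H) (hH1 : H < 1) (hδ0 : 0 < δ) (hδT : δ < T / 2)
    (hc2 : 8 / T ^ 2 * δ ^ (2 - 2 * K * H) ≤ ε / 2)
    (hc3 : (2:ℝ) ^ (-K) * ((T - δ) ^ (-(2 * K * H)) - T ^ (-(2 * K * H))) ≤ ε / 2)
    (s t : ℝ) (hs : s ∈ Set.Ioc (T - δ) T) (ht : t ∈ Set.Ioc (T - δ) T) (hst : s < t) :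
    |(1 - ((2:ℝ) ^ (-K) * ((t ^ (2 * H) + s ^ (2 * H)) ^ K - |t - s| ^ (2 * K * H))) /
          (t ^ (K * H) * s ^ (K * H))) / |t - s| ^ (2 * K * H)
        - (2:ℝ) ^ (-K) * T ^ (-(2 * K * H))| ≤ ε := by
  obtain ⟨hs1, hs2⟩ := hs
  obtain ⟨ht1, ht2⟩ := ht
  have hs0 : 0 < s := by linarith
  have ht0 : 0 < t := by linarith
  have hsT2 : T / 2 < s := by linarith
  have htT2 : T / 2 < t := by linarith
  have hd0' : 0 < t - s := sub_pos.2 hst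
  rw [abs_of_pos hd0']
  have hb2 : 2 * K * H < 2 := by nlinarith
  set u := t ^ H with hu
  set v := s ^ H with hv
  have hu0 : 0 < u := Real.rpow_pos_of_pos ht0 H
  have hv0 : 0 < v := Real.rpow_pos_of_pos hs0 H
  have h2t : t ^ (2 * H) = u ^ 2 := by
    rw [hu, ← Real.rpow_natCast (t ^ H) 2, ← Real.rpow_mul ht0.le]
    norm_num [mul_comm]
  have h2s : s ^ (2 * H) = v ^ 2 := by
    rw [hv, ← Real.rpow_natCast (s ^ H) 2, ← Real.rpow_mul hs0.le]
    norm_num [mul_comm]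
  have hKt : t ^ (K * H) = u ^ K := by
    rw [hu, mul_comm K H, Real.rpow_mul ht0.le]
  have hKs : s ^ (K * H) = v ^ K := by
    rw [hv, mul_comm K H, Real.rpow_mul hs0.le]
  rw [h2t, h2s, hKt, hKs]
  set d := t - s with hd
  have hd0 : 0 < d := hd0'
  have hdδ : d ≤ δ := by rw [hd]; linarith
  set D := d ^ (2 * K * H) with hD
  have hD0 : 0 < D := Real.rpow_pos_of_pos hd0 _
  set c := (2:ℝ) ^ (-K) with hc
  have hc0 : 0 < c := Real.rpow_pos_of_pos (by norm_num) _
  set B := u ^ K * v ^ K with hB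
  have hB0 : 0 < B := mul_pos (Real.rpow_pos_of_pos hu0 K) (Real.rpow_pos_of_pos hv0 K)
  have hBuv : B = (u * v) ^ K := by rw [hB, Real.mul_rpow hu0.le hv0.le]
  have hBts : B = (t * s) ^ (H * K) := by
    rw [hBuv, hu, hv, ← Real.mul_rpow ht0.le hs0.le,
      ← Real.rpow_mul (mul_nonneg ht0.le hs0.le)]
  have key : (1 - c * ((u ^ 2 + v ^ 2) ^ K - D) / B) / D - c * T ^ (-(2 * K * H))
      = (1 - c * (u ^ 2 + v ^ 2) ^ K / B) / D + (c / B - c * T ^ (-(2 * K * H))) := by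
    field_simp
    ring
  clear_value u v
  clear_value d D c B
  rw [key]
  -- the ratio equals r ^ K
  set r := (u ^ 2 + v ^ 2) / (2 * (u * v)) with hr
  clear_value r
  have h2uv : (0:ℝ) < 2 * (u * v) := by positivity
  have hArK : c * (u ^ 2 + v ^ 2) ^ K / B = r ^ K := by
    have hdiv : ((u ^ 2 + v ^ 2) / (2 * (u * v))) ^ K
        = (u ^ 2 + v ^ 2) ^ K / (2 * (u * v)) ^ K :=
      Real.div_rpow (by positivity) h2uv.le K
    have hmul : ((2:ℝ) * (u * v)) ^ K = 2 ^ K * (u * v) ^ K :=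
      Real.mul_rpow (by norm_num) (by positivity)
    have hneg : (2:ℝ) ^ (-K) = ((2:ℝ) ^ K)⁻¹ := Real.rpow_neg (by norm_num) K
    rw [hBuv, hr, hdiv, hmul, hc, hneg]
    have h2K : (0:ℝ) < 2 ^ K := Real.rpow_pos_of_pos (by norm_num) K
    have huvK : (0:ℝ) < (u * v) ^ K := Real.rpow_pos_of_pos (by positivity) K
    field_simp
  have hr1 : 1 ≤ r := by
    rw [hr, le_div_iff₀ h2uv]
    nlinarith [sq_nonneg (u - v)]
  have hrK1 : 1 ≤ r ^ K := by
    calc (1:ℝ) = r ^ (0:ℝ) := (Real.rpow_zero r).symm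
    _ ≤ r ^ K := Real.rpow_le_rpow_of_exponent_le hr1 hK0.le
  have hrKr : r ^ K ≤ r := by
    calc r ^ K ≤ r ^ (1:ℝ) := Real.rpow_le_rpow_of_exponent_le hr1 hK1
    _ = r := Real.rpow_one r
  -- bound on u - v
  have huv0 : v ≤ u := by rw [hu, hv]; exact Real.rpow_le_rpow hs0.le hst.le hH0.le
  have hvT : v ≤ T ^ H := by rw [hv]; exact Real.rpow_le_rpow hs0.le hs2 hH0.le
  have hTHpos : 0 < T ^ H := Real.rpow_pos_of_pos hT H
  have huvd : u - v ≤ 2 * T ^ H / T * d := by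
    have e1 : t = s * (t / s) := by field_simp
    have h1 : u ≤ v * (t / s) := by
      calc u = (s * (t / s)) ^ H := by rw [← e1, hu]
      _ = s ^ H * (t / s) ^ H := Real.mul_rpow hs0.le (by positivity)
      _ ≤ s ^ H * (t / s) ^ (1:ℝ) := by
          have hts1 : (1:ℝ) ≤ t / s := (one_le_div hs0).2 hst.le
          exact mul_le_mul_of_nonneg_left
            (Real.rpow_le_rpow_of_exponent_le hts1 hH1.le) (by positivity)
      _ = v * (t / s) := by rw [Real.rpow_one, hv]
    have h2 : (u - v) * s ≤ v * d := by
      have h1' := mul_le_mul_of_nonneg_right h1 hs0.le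
      have e2 : v * (t / s) * s = v * t := by field_simp
      rw [e2] at h1'
      rw [hd]
      linarith
    have h3 : (u - v) * s ≤ T ^ H * d := by
      have hvd : v * d ≤ T ^ H * d := mul_le_mul_of_nonneg_right hvT hd0.le
      linarith
    have h4 : (u - v) * T ≤ (u - v) * (2 * s) :=
      mul_le_mul_of_nonneg_left (by linarith) (by linarith)
    rw [div_mul_eq_mul_div, le_div_iff₀ hT]
    linarith
  have hTH2 : (T / 2) ^ H ≤ u := by
    rw [hu]; exact Real.rpow_le_rpow (by positivity) htT2.le hH0.le
  have hTH2v : (T / 2) ^ H ≤ v := by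
    rw [hv]; exact Real.rpow_le_rpow (by positivity) hsT2.le hH0.le
  have hTH2pos : 0 < (T / 2) ^ H := Real.rpow_pos_of_pos (by linarith) H
  -- first term bound
  have hdD : d ^ (2:ℕ) / D = d ^ (2 - 2 * K * H) := by
    rw [hD, ← Real.rpow_natCast d 2, ← Real.rpow_sub hd0]
    norm_num
  have hTHle : T ^ H ≤ 2 * (T / 2) ^ H := by
    have e : T = 2 * (T / 2) := by ring
    calc T ^ H = (2 * (T / 2)) ^ H := by rw [← e]
    _ = 2 ^ H * (T / 2) ^ H := Real.mul_rpow (by norm_num) (by positivity)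
    _ ≤ 2 ^ (1:ℝ) * (T / 2) ^ H := by
        exact mul_le_mul_of_nonneg_right
          (Real.rpow_le_rpow_of_exponent_le one_le_two hH1.le) (by positivity)
    _ = 2 * (T / 2) ^ H := by rw [Real.rpow_one]
  have term1 : |(1 - c * (u ^ 2 + v ^ 2) ^ K / B) / D| ≤ ε / 2 := by
    rw [hArK]
    have habs : |(1 - r ^ K) / D| = (r ^ K - 1) / D := by
      rw [abs_div, abs_of_pos hD0, abs_of_nonpos (by linarith)]
      ring_nf
    rw [habs]
    have hrsub : r - 1 = (u - v) ^ 2 / (2 * (u * v)) := by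
      rw [hr]; field_simp; ring
    have step1 : (r ^ K - 1) / D ≤ (u - v) ^ 2 / (2 * (u * v)) / D := by
      rw [← hrsub]
      exact (div_le_div_iff_of_pos_right hD0).2 (by linarith)
    have hnum : (u - v) ^ 2 ≤ (2 * T ^ H / T * d) ^ 2 := by
      have hpos : 0 < 2 * T ^ H / T * d := by positivity
      apply sq_le_sq'
      · linarith
      · exact huvd
    have hden : 2 * ((T / 2) ^ H * (T / 2) ^ H) ≤ 2 * (u * v) := by
      have h := mul_le_mul hTH2 hTH2v hTH2pos.le hu0.le
      linarith
    have step2 : (u - v) ^ 2 / (2 * (u * v)) / D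
        ≤ (2 * T ^ H / T * d) ^ 2 / (2 * ((T / 2) ^ H * (T / 2) ^ H)) / D := by
      gcongr
    have step3 : (2 * T ^ H / T * d) ^ 2 / (2 * ((T / 2) ^ H * (T / 2) ^ H)) / D
        = (2 * T ^ H / T) ^ 2 / (2 * ((T / 2) ^ H * (T / 2) ^ H)) * (d ^ (2:ℕ) / D) := by
      ring
    have hcoef : (2 * T ^ H / T) ^ 2 / (2 * ((T / 2) ^ H * (T / 2) ^ H)) ≤ 8 / T ^ 2 := by
      rw [div_le_div_iff₀ (by positivity) (by positivity)]
      have e : (2 * T ^ H / T) ^ 2 * T ^ 2 = 4 * (T ^ H) ^ 2 := by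
        field_simp
        ring
      rw [e]
      have h := pow_le_pow_left₀ hTHpos.le hTHle 2
      have h2 : (2 * (T / 2) ^ H) ^ 2 = 4 * ((T / 2) ^ H * (T / 2) ^ H) := by ring
      rw [h2] at h
      linarith
    have hdle : d ^ (2 - 2 * K * H) ≤ δ ^ (2 - 2 * K * H) :=
      Real.rpow_le_rpow hd0.le hdδ (by linarith)
    calc (r ^ K - 1) / D ≤ (2 * T ^ H / T) ^ 2 / (2 * ((T / 2) ^ H * (T / 2) ^ H))
          * (d ^ (2:ℕ) / D) := by rw [← step3]; exact step1.trans step2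
    _ ≤ 8 / T ^ 2 * (d ^ (2:ℕ) / D) := by
        apply mul_le_mul_of_nonneg_right hcoef
        positivity
    _ = 8 / T ^ 2 * d ^ (2 - 2 * K * H) := by rw [hdD]
    _ ≤ 8 / T ^ 2 * δ ^ (2 - 2 * K * H) := by
        apply mul_le_mul_of_nonneg_left hdle
        positivity
    _ ≤ ε / 2 := hc2
  -- second term bound
  have hTδ0 : 0 < T - δ := by linarith
  have hsq1 : (T - δ) ^ (2:ℝ) = (T - δ) * (T - δ) := by
    rw [show ((2:ℝ)) = ((2:ℕ):ℝ) by norm_num, Real.rpow_natCast]; ring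
  have hsq2 : T ^ (2:ℝ) = T * T := by
    rw [show ((2:ℝ)) = ((2:ℕ):ℝ) by norm_num, Real.rpow_natCast]; ring
  have hBlow : (T - δ) ^ (2 * K * H) ≤ B := by
    rw [hBts]
    have e : (2:ℝ) * K * H = 2 * (H * K) := by ring
    rw [e, Real.rpow_mul hTδ0.le]
    apply Real.rpow_le_rpow (by positivity) ?_ (by positivity)
    rw [hsq1]
    exact mul_le_mul ht1.le hs1.le hTδ0.le ht0.le
  have hBhigh : B ≤ T ^ (2 * K * H) := by
    rw [hBts]
    have e : (2:ℝ) * K * H = 2 * (H * K) := by ring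
    rw [e, Real.rpow_mul hT.le]
    apply Real.rpow_le_rpow (by positivity) ?_ (by positivity)
    rw [hsq2]
    exact mul_le_mul ht2 hs2 hs0.le hT.le
  have term2 : |c / B - c * T ^ (-(2 * K * H))| ≤ ε / 2 := by
    have hTb : T ^ (-(2 * K * H)) = (T ^ (2 * K * H))⁻¹ := Real.rpow_neg hT.le _
    have hTδb : (T - δ) ^ (-(2 * K * H)) = ((T - δ) ^ (2 * K * H))⁻¹ :=
      Real.rpow_neg hTδ0.le _
    have h1 : c * T ^ (-(2 * K * H)) ≤ c / B := by
      rw [hTb, div_eq_mul_inv]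
      exact mul_le_mul_of_nonneg_left (inv_anti₀ hB0 hBhigh) hc0.le
    have h2 : c / B ≤ c * (T - δ) ^ (-(2 * K * H)) := by
      rw [hTδb, div_eq_mul_inv]
      exact mul_le_mul_of_nonneg_left
        (inv_anti₀ (Real.rpow_pos_of_pos hTδ0 _) hBlow) hc0.le
    rw [abs_of_nonneg (by linarith)]
    calc c / B - c * T ^ (-(2 * K * H))
        ≤ c * (T - δ) ^ (-(2 * K * H)) - c * T ^ (-(2 * K * H)) := by linarith
    _ = c * ((T - δ) ^ (-(2 * K * H)) - T ^ (-(2 * K * H))) := by ring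
    _ ≤ ε / 2 := hc3
  calc |(1 - c * (u ^ 2 + v ^ 2) ^ K / B) / D + (c / B - c * T ^ (-(2 * K * H)))|
      ≤ |(1 - c * (u ^ 2 + v ^ 2) ^ K / B) / D| + |c / B - c * T ^ (-(2 * K * H))| :=
        abs_add_le _ _
  _ ≤ ε / 2 + ε / 2 := add_le_add term1 term2
  _ = ε := by ring

/-- local expansion of the standardized bifractional Brownian motion
covariance near `T`:
`1 - R(t,s)/(t^{KH} s^{KH}) = 2^{-K} T^{-2KH} |t-s|^{2KH} + o(|t-s|^{2KH})`
as `min(s,t) → T`. -/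
theorem stmt5 (T K H : ℝ) (hT : 0 < T) (hK : K ∈ Set.Ioc (0:ℝ) 1) (hH : H ∈ Set.Ioo (0:ℝ) 1) :
    ∀ ε > 0, ∃ δ > 0, ∀ s t : ℝ, s ∈ Set.Ioc (T - δ) T → t ∈ Set.Ioc (T - δ) T → s ≠ t →
      |(1 - ((2:ℝ) ^ (-K) * ((t ^ (2 * H) + s ^ (2 * H)) ^ K - |t - s| ^ (2 * K * H))) /
            (t ^ (K * H) * s ^ (K * H))) / |t - s| ^ (2 * K * H)
          - (2:ℝ) ^ (-K) * T ^ (-(2 * K * H))| ≤ ε := by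
  obtain ⟨hK0, hK1⟩ := hK
  obtain ⟨hH0, hH1⟩ := hH
  intro ε hε
  have hb2 : 2 * K * H < 2 := by nlinarith
  -- eventually properties of δ in 𝓝[>] 0
  have ev1 : ∀ᶠ δ in nhdsWithin (0:ℝ) (Set.Ioi 0), δ < T / 2 := by
    have : Set.Ioo (0:ℝ) (T / 2) ∈ nhdsWithin (0:ℝ) (Set.Ioi 0) :=
      Ioo_mem_nhdsGT_of_mem ⟨le_refl 0, by linarith⟩
    filter_upwards [this] with δ hδ using hδ.2
  have ev2 : ∀ᶠ δ in nhdsWithin (0:ℝ) (Set.Ioi 0),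
      8 / T ^ 2 * δ ^ (2 - 2 * K * H) < ε / 2 := by
    have hcont : ContinuousAt (fun δ : ℝ => 8 / T ^ 2 * δ ^ (2 - 2 * K * H)) 0 :=
      continuousAt_const.mul (Real.continuousAt_rpow_const 0 _ (Or.inr (by linarith)))
    have htend : Filter.Tendsto (fun δ : ℝ => 8 / T ^ 2 * δ ^ (2 - 2 * K * H))
        (nhdsWithin (0:ℝ) (Set.Ioi 0))
        (nhds (8 / T ^ 2 * (0:ℝ) ^ (2 - 2 * K * H))) :=
      hcont.continuousWithinAt
    apply htend.eventually_lt_const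
    rw [Real.zero_rpow (by intro h; nlinarith)]
    simpa using by linarith
  have ev3 : ∀ᶠ δ in nhdsWithin (0:ℝ) (Set.Ioi 0),
      (2:ℝ) ^ (-K) * ((T - δ) ^ (-(2 * K * H)) - T ^ (-(2 * K * H))) < ε / 2 := by
    have hcont : ContinuousAt
        (fun δ : ℝ => (2:ℝ) ^ (-K) * ((T - δ) ^ (-(2 * K * H)) - T ^ (-(2 * K * H)))) 0 := by
      apply continuousAt_const.mul
      apply ContinuousAt.sub ?_ continuousAt_const
      have h1 : ContinuousAt (fun x : ℝ => x ^ (-(2 * K * H))) (T - 0) :=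
        Real.continuousAt_rpow_const (T - 0) _ (Or.inl (by simp; linarith))
      exact h1.comp (continuousAt_const.sub continuousAt_id)
    have htend : Filter.Tendsto
        (fun δ : ℝ => (2:ℝ) ^ (-K) * ((T - δ) ^ (-(2 * K * H)) - T ^ (-(2 * K * H))))
        (nhdsWithin (0:ℝ) (Set.Ioi 0))
        (nhds ((2:ℝ) ^ (-K) * ((T - 0) ^ (-(2 * K * H)) - T ^ (-(2 * K * H))))) :=
      hcont.continuousWithinAt
    apply htend.eventually_lt_const
    simp
    linarith
  obtain ⟨δ, hδprop, hδmem⟩ := ((ev1.and (ev2.and ev3)).and self_mem_nhdsWithin).exists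
  obtain ⟨hδT, hc2, hc3⟩ := hδprop
  refine ⟨δ, hδmem, ?_⟩
  intro s t hs ht hne
  rcases hne.lt_or_gt with h | h
  · exact bifbm_core T K H ε δ hT hK0 hK1 hH0 hH1 hδmem hδT hc2.le hc3.le s t hs ht h
  · rw [abs_sub_comm t s, add_comm (t ^ (2 * H)) (s ^ (2 * H)),
      mul_comm (t ^ (K * H)) (s ^ (K * H))]
    exact bifbm_core T K H ε δ hT hK0 hK1 hH0 hH1 hδmem hδT hc2.le hc3.le t s ht hs h
end

section
/- Fix T > 0 and H ∈ (0,1). Define R(t,s) = t^{2H} + s^{2H} − ((t+s)^{2H} + |t−s|^{2H})/2 for s,t > 0 (the sub-fractional Brownian motion covariance), and σ(t) = ((2−2^{2H−1}) t^{2H})^{1/2}. Then, as min(s,t) → T: 1 − R(t,s)/(σ(t)σ(s)) = |t−s|^{2H}/(2(2−2^{2H−1}) T^{2H}) + o(|t−s|^{2H}); precisely, for every ε > 0 there exists δ > 0 such that for all s, t ∈ (T−δ, T] with s ≠ t, |(1 − R(t,s)/(σ(t)σ(s)))/|t−s|^{2H} − 1/(2(2−2^{2H−1}) T^{2H})| ≤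 ε. -/
open Filter Set

lemma rpow_bound {a b : ℝ} (ha : 0 < a) (p : ℝ) {x : ℝ} (hx : x ∈ Icc a b) :
    x ^ p ≤ a ^ p + b ^ p := by
  rcases le_total 0 p with hp | hp
  · have : x ^ p ≤ b ^ p := Real.rpow_le_rpow (ha.le.trans hx.1) hx.2 hp
    have ha' : 0 ≤ a ^ p := Real.rpow_nonneg ha.le p
    linarith
  · have : x ^ p ≤ a ^ p := Real.rpow_le_rpow_of_nonpos ha hx.1 hp
    have hb' : 0 ≤ b ^ p := Real.rpow_nonneg (ha.le.trans (hx.1.trans hx.2)) p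
    linarith

lemma rpow_lip {a b : ℝ} (ha : 0 < a) (p : ℝ) {x y : ℝ} (hx : x ∈ Icc a b) (hy : y ∈ Icc a b) :
    |x ^ p - y ^ p| ≤ (|p| * (a ^ (p-1) + b ^ (p-1))) * |x - y| := by
  have key := Convex.norm_image_sub_le_of_norm_hasDerivWithin_le
    (f := fun z : ℝ => z ^ p) (f' := fun z : ℝ => p * z ^ (p-1)) (s := Icc a b)
    (C := |p| * (a ^ (p-1) + b ^ (p-1)))
    (fun z hz => (Real.hasDerivAt_rpow_const (Or.inl (ha.trans_le hz.1).ne')).hasDerivWithinAt)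
    (fun z hz => by
      rw [Real.norm_eq_abs, abs_mul, abs_of_nonneg (Real.rpow_nonneg (ha.le.trans hz.1) _)]
      have := rpow_bound ha (p-1) hz
      have hp : 0 ≤ |p| := abs_nonneg p
      nlinarith)
    (convex_Icc a b) hy hx
  simpa [Real.norm_eq_abs] using key

lemma gHasDeriv (H k t u : ℝ) (ht : 0 < t) (hu : 0 < u) :
    HasDerivAt (fun v : ℝ => k * v ^ H - t ^ (2*H) - v ^ (2*H) + (t+v) ^ (2*H) / 2)
      (k * (H * u ^ (H-1)) - (2*H) * u ^ (2*H-1) + ((2*H) * (t+u) ^ (2*H-1) * 1) / 2) u := by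
  have h1 : HasDerivAt (fun v : ℝ => k * v ^ H) (k * (H * u ^ (H-1))) u :=
    (Real.hasDerivAt_rpow_const (Or.inl hu.ne')).const_mul k
  have h2 : HasDerivAt (fun v : ℝ => v ^ (2*H)) ((2*H) * u ^ (2*H-1)) u :=
    Real.hasDerivAt_rpow_const (Or.inl hu.ne')
  have h3 : HasDerivAt (fun v : ℝ => (t+v) ^ (2*H)) ((2*H) * (t+u) ^ (2*H-1) * 1) u := by
    exact (Real.hasDerivAt_rpow_const (p := 2*H)
      (Or.inl (by positivity : (0:ℝ) < t + u).ne')).comp u ((hasDerivAt_id u).const_add t)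
  exact ((h1.sub_const _).sub h2).add (h3.div_const 2)

lemma Gbound (T H : ℝ) (hT : 0 < T) (hH : H ∈ Set.Ioo (0:ℝ) 1) :
    ∃ K : ℝ, 0 ≤ K ∧ ∀ t ∈ Icc (T/2) T, ∀ s ∈ Icc (T/2) T,
      |(2 - 2 ^ (2*H-1)) * t ^ H * s ^ H - t ^ (2*H) - s ^ (2*H) + (t+s) ^ (2*H) / 2|
        ≤ K * (|s - t| * |s - t|) := by
  obtain ⟨hH0, hH1⟩ := hH
  set c : ℝ := 2 - 2 ^ (2*H-1) with hc
  have hc2 : (2:ℝ) ^ (2*H-1) < 2 := by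
    calc (2:ℝ) ^ (2*H-1) < 2 ^ (1:ℝ) :=
          Real.rpow_lt_rpow_of_exponent_lt one_lt_two (by linarith)
      _ = 2 := Real.rpow_one 2
  have hc0 : 0 < c := by simp only [hc]; linarith
  have hcle : c ≤ 2 := by
    have : (0:ℝ) < 2 ^ (2*H-1) := Real.rpow_pos_of_pos two_pos _
    simp only [hc]; linarith
  set L₁ : ℝ := |H-1| * ((T/2) ^ (H-1-1) + (2*T) ^ (H-1-1)) with hL₁
  set L₂ : ℝ := |2*H-1| * ((T/2) ^ (2*H-1-1) + (2*T) ^ (2*H-1-1)) with hL₂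
  have hT2 : (0:ℝ) < T/2 := by linarith
  have hL₁0 : 0 ≤ L₁ := by positivity
  have hL₂0 : 0 ≤ L₂ := by positivity
  have hTH : (0:ℝ) ≤ T ^ H := Real.rpow_nonneg hT.le H
  refine ⟨2 * T ^ H * L₁ + 3 * L₂, by positivity, ?_⟩
  intro t ht s hs
  have ht0 : 0 < t := hT2.trans_le ht.1
  have hs0 : 0 < s := hT2.trans_le hs.1
  set k : ℝ := c * t ^ H with hk
  have hkb : |k| ≤ 2 * T ^ H := by
    rw [abs_of_nonneg (by positivity)]
    have h1 : t ^ H ≤ T ^ H := Real.rpow_le_rpow ht0.le ht.2 hH0.le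
    nlinarith [Real.rpow_nonneg ht0.le H]
  -- derivative at t vanishes
  have e1 : t ^ H * t ^ (H-1) = t ^ (2*H-1) := by
    rw [← Real.rpow_add ht0]; ring_nf
  have e2 : (t + t) ^ (2*H-1) = 2 ^ (2*H-1) * t ^ (2*H-1) := by
    rw [show t + t = 2 * t by ring, Real.mul_rpow (by norm_num) ht0.le]
  have hDt : k * (H * t ^ (H-1)) - (2*H) * t ^ (2*H-1) + ((2*H) * (t+t) ^ (2*H-1) * 1) / 2 = 0 := by
    rw [e2]; simp only [hk, hc]
    linear_combination ((2 - (2:ℝ) ^ (2*H-1)) * H) * e1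
  -- bound the derivative on the segment
  have hderivb : ∀ u ∈ Icc (min t s) (max t s),
      ‖k * (H * u ^ (H-1)) - (2*H) * u ^ (2*H-1) + ((2*H) * (t+u) ^ (2*H-1) * 1) / 2‖
        ≤ (2 * T ^ H * L₁ + 3 * L₂) * |s - t| := by
    intro u hu
    have hu1 : T/2 ≤ u := le_trans (le_min ht.1 hs.1) hu.1
    have hu2 : u ≤ T := le_trans hu.2 (max_le ht.2 hs.2)
    have hu0 : 0 < u := hT2.trans_le hu1
    have hmem : u ∈ Icc (T/2) (2*T) := ⟨hu1, by linarith⟩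
    have hmemt : t ∈ Icc (T/2) (2*T) := ⟨ht.1, by linarith [ht.2]⟩
    have hmemtu : t + u ∈ Icc (T/2) (2*T) := ⟨by linarith [ht.1], by linarith [ht.2]⟩
    have hmemtt : t + t ∈ Icc (T/2) (2*T) := ⟨by linarith [ht.1], by linarith [ht.2]⟩
    have habs : |u - t| ≤ |s - t| := by
      rw [abs_le]
      constructor
      · have h1 : t - |s - t| ≤ min t s := le_min (by linarith [abs_nonneg (s-t)])
          (by linarith [neg_abs_le (s - t)])
        linarith [hu.1]
      · have h2 : max t s ≤ t + |s - t| := max_le (by linarith [abs_nonneg (s-t)])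
          (by linarith [le_abs_self (s - t)])
        linarith [hu.2]
    have lip1 : |u ^ (H-1) - t ^ (H-1)| ≤ L₁ * |u - t| := rpow_lip hT2 (H-1) hmem hmemt
    have lip2 : |u ^ (2*H-1) - t ^ (2*H-1)| ≤ L₂ * |u - t| := rpow_lip hT2 (2*H-1) hmem hmemt
    have lip3 : |(t+u) ^ (2*H-1) - (t+t) ^ (2*H-1)| ≤ L₂ * |u - t| := by
      have h := rpow_lip hT2 (2*H-1) hmemtu hmemtt
      calc |(t+u) ^ (2*H-1) - (t+t) ^ (2*H-1)| ≤ L₂ * |(t+u) - (t+t)| := h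
        _ = L₂ * |u - t| := by congr 1; rw [show t + u - (t + t) = u - t by ring]
    rw [Real.norm_eq_abs]
    have hEq : k * (H * u ^ (H-1)) - (2*H) * u ^ (2*H-1) + ((2*H) * (t+u) ^ (2*H-1) * 1) / 2
        = (k*H) * (u ^ (H-1) - t ^ (H-1)) - (2*H) * (u ^ (2*H-1) - t ^ (2*H-1))
          + H * ((t+u) ^ (2*H-1) - (t+t) ^ (2*H-1)) := by
      linear_combination hDt
    rw [hEq]
    have tri : |(k*H) * (u ^ (H-1) - t ^ (H-1)) - (2*H) * (u ^ (2*H-1) - t ^ (2*H-1))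
          + H * ((t+u) ^ (2*H-1) - (t+t) ^ (2*H-1))|
        ≤ |k*H| * |u ^ (H-1) - t ^ (H-1)| + |2*H| * |u ^ (2*H-1) - t ^ (2*H-1)|
          + |H| * |(t+u) ^ (2*H-1) - (t+t) ^ (2*H-1)| := by
      rw [← abs_mul, ← abs_mul, ← abs_mul]
      have t1 := abs_add_le ((k*H) * (u ^ (H-1) - t ^ (H-1)) - (2*H) * (u ^ (2*H-1) - t ^ (2*H-1))) (H * ((t+u) ^ (2*H-1) - (t+t) ^ (2*H-1)))
      have t2 := abs_sub ((k*H) * (u ^ (H-1) - t ^ (H-1))) ((2*H) * (u ^ (2*H-1) - t ^ (2*H-1)))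
      linarith
    have b1 : |k*H| * |u ^ (H-1) - t ^ (H-1)| ≤ (2 * T ^ H) * (L₁ * |s - t|) := by
      apply mul_le_mul
      · rw [abs_mul, abs_of_nonneg hH0.le]
        calc |k| * H ≤ |k| * 1 := mul_le_mul_of_nonneg_left hH1.le (abs_nonneg k)
          _ = |k| := mul_one _
          _ ≤ 2 * T ^ H := hkb
      · exact lip1.trans (mul_le_mul_of_nonneg_left habs hL₁0)
      · exact abs_nonneg _
      · positivity
    have b2 : |2*H| * |u ^ (2*H-1) - t ^ (2*H-1)| ≤ 2 * (L₂ * |s - t|) := by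
      apply mul_le_mul
      · rw [abs_of_nonneg (by linarith : (0:ℝ) ≤ 2*H)]; linarith
      · exact lip2.trans (mul_le_mul_of_nonneg_left habs hL₂0)
      · exact abs_nonneg _
      · norm_num
    have b3 : |H| * |(t+u) ^ (2*H-1) - (t+t) ^ (2*H-1)| ≤ 1 * (L₂ * |s - t|) := by
      apply mul_le_mul
      · rw [abs_of_nonneg hH0.le]; linarith
      · exact lip3.trans (mul_le_mul_of_nonneg_left habs hL₂0)
      · exact abs_nonneg _
      · norm_num
    calc _ ≤ _ := tri
      _ ≤ (2 * T ^ H) * (L₁ * |s - t|) + 2 * (L₂ * |s - t|) + 1 * (L₂ * |s - t|) := by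
          linarith
      _ = (2 * T ^ H * L₁ + 3 * L₂) * |s - t| := by ring
  have key := Convex.norm_image_sub_le_of_norm_hasDerivWithin_le
    (f := fun v : ℝ => k * v ^ H - t ^ (2*H) - v ^ (2*H) + (t+v) ^ (2*H) / 2)
    (f' := fun u : ℝ => k * (H * u ^ (H-1)) - (2*H) * u ^ (2*H-1) + ((2*H) * (t+u) ^ (2*H-1) * 1) / 2)
    (s := Icc (min t s) (max t s)) (x := t) (y := s)
    (C := (2 * T ^ H * L₁ + 3 * L₂) * |s - t|)
    (fun u hu => by
      have hu0 : 0 < u := lt_of_lt_of_le hT2 (le_trans (le_min ht.1 hs.1) hu.1)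
      exact (gHasDeriv H k t u ht0 hu0).hasDerivWithinAt)
    hderivb (convex_Icc _ _)
    ⟨min_le_left _ _, le_max_left _ _⟩ ⟨min_le_right _ _, le_max_right _ _⟩
  have g_t : k * t ^ H - t ^ (2*H) - t ^ (2*H) + (t+t) ^ (2*H) / 2 = 0 := by
    have f1 : t ^ H * t ^ H = t ^ (2*H) := by rw [← Real.rpow_add ht0]; ring_nf
    have f2 : (t + t) ^ (2*H) = 2 ^ (2*H) * t ^ (2*H) := by
      rw [show t + t = 2 * t by ring, Real.mul_rpow (by norm_num) ht0.le]
    have f3 : (2:ℝ) ^ (2*H) = 2 ^ (2*H-1) * 2 := by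
      have h := Real.rpow_add two_pos (2*H-1) 1
      rw [Real.rpow_one] at h
      rw [← h]; congr 1; ring
    rw [f2, f3]; simp only [hk, hc]
    linear_combination (2 - (2:ℝ) ^ (2*H-1)) * f1
  simp only [Real.norm_eq_abs] at key
  rw [g_t, sub_zero] at key
  calc |c * t ^ H * s ^ H - t ^ (2*H) - s ^ (2*H) + (t+s) ^ (2*H) / 2| =
      |k * s ^ H - t ^ (2*H) - s ^ (2*H) + (t+s) ^ (2*H) / 2| := by rw [hk]
    _ ≤ (2 * T ^ H * L₁ + 3 * L₂) * |s - t| * |s - t| := key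
    _ = (2 * T ^ H * L₁ + 3 * L₂) * (|s - t| * |s - t|) := by ring

set_option maxHeartbeats 1000000 in
/-- local expansion of the standardized sub-fractional Brownian motion
covariance near `T`:
`1 - R(t,s)/(σ(t)σ(s)) = |t-s|^{2H}/(2(2-2^{2H-1})T^{2H}) + o(|t-s|^{2H})`
as `min(s,t) → T`, where `σ(t) = ((2-2^{2H-1}) t^{2H})^{1/2}`. -/
theorem stmt6 (T H : ℝ) (hT : 0 < T) (hH : H ∈ Set.Ioo (0:ℝ) 1) :
    ∀ ε > 0, ∃ δ > 0, ∀ s t : ℝ, s ∈ Set.Ioc (T - δ) T → t ∈ Set.Ioc (T - δ) T → s ≠ t →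
      |(1 - (t ^ (2 * H) + s ^ (2 * H) - ((t + s) ^ (2 * H) + |t - s| ^ (2 * H)) / 2) /
            (Real.sqrt ((2 - 2 ^ (2 * H - 1)) * t ^ (2 * H)) *
              Real.sqrt ((2 - 2 ^ (2 * H - 1)) * s ^ (2 * H)))) / |t - s| ^ (2 * H)
          - 1 / (2 * (2 - 2 ^ (2 * H - 1)) * T ^ (2 * H))| ≤ ε := by
  obtain ⟨hH0, hH1⟩ := hH
  obtain ⟨K, hK0, hKb⟩ := Gbound T H hT ⟨hH0, hH1⟩
  intro ε hε
  have hc2 : (2:ℝ) ^ (2*H-1) < 2 := by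
    calc (2:ℝ) ^ (2*H-1) < 2 ^ (1:ℝ) :=
          Real.rpow_lt_rpow_of_exponent_lt one_lt_two (by linarith)
      _ = 2 := Real.rpow_one 2
  set c : ℝ := 2 - 2 ^ (2*H - 1) with hc
  have hc0 : 0 < c := by simp only [hc]; linarith
  have hT2 : (0:ℝ) < T/2 := by linarith
  have hq : (0:ℝ) < 2 - 2*H := by linarith
  set m : ℝ := (T/2) ^ H * (T/2) ^ H with hm
  have hm0 : 0 < m := by positivity
  have hP0 : (0:ℝ) < T ^ (2*H) := Real.rpow_pos_of_pos hT _
  set L₃ : ℝ := |H| * ((T/2) ^ (H-1) + (2*T) ^ (H-1)) with hL₃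
  have hL₃0 : 0 ≤ L₃ := by positivity
  have hTH : (0:ℝ) < T ^ H := Real.rpow_pos_of_pos hT H
  set C₁ : ℝ := (2 * T ^ H * L₃) / (2 * c * m * T ^ (2*H)) with hC₁
  have hC₁0 : 0 ≤ C₁ := by positivity
  set δ₂ : ℝ := ε / (2 * (C₁ + 1)) with hδ₂
  have hδ₂0 : 0 < δ₂ := by positivity
  set δ₃ : ℝ := (ε * c * m / (2 * (K + 1))) ^ (2 - 2*H)⁻¹ with hδ₃
  have hεcm : 0 < ε * c * m / (2 * (K + 1)) := by positivity
  have hδ₃0 : 0 < δ₃ := Real.rpow_pos_of_pos hεcm _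
  refine ⟨min (min (T/2) δ₂) δ₃, by positivity, ?_⟩
  intro s t hs ht hst
  set δ : ℝ := min (min (T/2) δ₂) δ₃ with hδ
  have hδT : δ ≤ T/2 := le_trans (min_le_left _ _) (min_le_left _ _)
  have hδ2 : δ ≤ δ₂ := le_trans (min_le_left _ _) (min_le_right _ _)
  have hδ3 : δ ≤ δ₃ := min_le_right _ _
  have hsI : s ∈ Icc (T/2) T := ⟨by have := hs.1; linarith, hs.2⟩
  have htI : t ∈ Icc (T/2) T := ⟨by have := ht.1; linarith, ht.2⟩
  have hs0 : 0 < s := hT2.trans_le hsI.1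
  have ht0 : 0 < t := hT2.trans_le htI.1
  have hts : |t - s| < δ := by
    rw [abs_lt]
    constructor
    · have := hs.2; have := ht.1; linarith
    · have := ht.2; have := hs.1; linarith
  have hu0 : 0 < |t - s| := abs_pos.2 (sub_ne_zero.2 (Ne.symm hst))
  have hu : 0 < |t - s| ^ (2*H) := Real.rpow_pos_of_pos hu0 _
  -- simplify the sqrt product
  have hsq : ∀ x : ℝ, 0 < x → Real.sqrt (c * x ^ (2*H)) = Real.sqrt c * x ^ H := by
    intro x hx
    have hx2 : Real.sqrt (x ^ (2*H)) = x ^ H := by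
      rw [Real.sqrt_eq_rpow, ← Real.rpow_mul hx.le]
      congr 1
      ring
    rw [Real.sqrt_mul hc0.le, hx2]
  have hσ : Real.sqrt (c * t ^ (2*H)) * Real.sqrt (c * s ^ (2*H)) = c * (t ^ H * s ^ H) := by
    rw [hsq t ht0, hsq s hs0]
    rw [show Real.sqrt c * t ^ H * (Real.sqrt c * s ^ H)
        = (Real.sqrt c * Real.sqrt c) * (t ^ H * s ^ H) by ring, Real.mul_self_sqrt hc0.le]
  rw [hσ]
  -- key algebraic identity
  have hA0 : (0:ℝ) < c * (t ^ H * s ^ H) := by positivity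
  have main_eq :
      (1 - (t ^ (2*H) + s ^ (2*H) - ((t + s) ^ (2*H) + |t - s| ^ (2*H)) / 2) /
          (c * (t ^ H * s ^ H))) / |t - s| ^ (2*H) - 1 / (2 * c * T ^ (2*H))
      = (T ^ (2*H) - t ^ H * s ^ H) / (2 * c * (t ^ H * s ^ H) * T ^ (2*H))
        + (c * t ^ H * s ^ H - t ^ (2*H) - s ^ (2*H) + (t + s) ^ (2*H) / 2) /
            ((c * (t ^ H * s ^ H)) * |t - s| ^ (2*H)) := by
    field_simp
    ring
  rw [main_eq]
  -- bound each term by ε/2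
  have hths : 0 < t ^ H * s ^ H := by positivity
  have hmle : m ≤ t ^ H * s ^ H := by
    have h1 : (T/2) ^ H ≤ t ^ H := Real.rpow_le_rpow hT2.le htI.1 hH0.le
    have h2 : (T/2) ^ H ≤ s ^ H := Real.rpow_le_rpow hT2.le hsI.1 hH0.le
    have h3 : (0:ℝ) ≤ (T/2) ^ H := by positivity
    rw [hm]; nlinarith
  have first : |(T ^ (2*H) - t ^ H * s ^ H) / (2 * c * (t ^ H * s ^ H) * T ^ (2*H))| ≤ ε/2 := by
    have hlt : |t ^ H - T ^ H| ≤ L₃ * δ := by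
      have hmemt : t ∈ Icc (T/2) (2*T) := ⟨htI.1, by linarith [htI.2]⟩
      have hmemT : T ∈ Icc (T/2) (2*T) := ⟨by linarith, by linarith⟩
      refine (rpow_lip hT2 H hmemt hmemT).trans ?_
      have : |t - T| ≤ δ := by rw [abs_le]; constructor <;> [linarith [ht.1, ht.2]; linarith [ht.2, hδT]]
      have hmul := mul_le_mul_of_nonneg_left this
        (by positivity : (0:ℝ) ≤ |H| * ((T/2) ^ (H-1) + (2*T) ^ (H-1)))
      rw [hL₃]
      exact hmul
    have hls : |s ^ H - T ^ H| ≤ L₃ * δ := by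
      have hmems : s ∈ Icc (T/2) (2*T) := ⟨hsI.1, by linarith [hsI.2]⟩
      have hmemT : T ∈ Icc (T/2) (2*T) := ⟨by linarith, by linarith⟩
      refine (rpow_lip hT2 H hmems hmemT).trans ?_
      have : |s - T| ≤ δ := by rw [abs_le]; constructor <;> [linarith [hs.1, hs.2]; linarith [hs.2, hδT]]
      have hmul := mul_le_mul_of_nonneg_left this
        (by positivity : (0:ℝ) ≤ |H| * ((T/2) ^ (H-1) + (2*T) ^ (H-1)))
      rw [hL₃]
      exact hmul
    have hTHsq : T ^ (2*H) = T ^ H * T ^ H := by rw [← Real.rpow_add hT]; congr 1; ring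
    have hnum : |T ^ (2*H) - t ^ H * s ^ H| ≤ 2 * T ^ H * L₃ * δ := by
      have htT : t ^ H ≤ T ^ H := Real.rpow_le_rpow ht0.le htI.2 hH0.le
      have hsT : s ^ H ≤ T ^ H := Real.rpow_le_rpow hs0.le hsI.2 hH0.le
      have hsH0 : 0 ≤ s ^ H := by positivity
      have expand : T ^ (2*H) - t ^ H * s ^ H
          = T ^ H * (T ^ H - s ^ H) + s ^ H * (T ^ H - t ^ H) := by rw [hTHsq]; ring
      rw [expand]
      calc |T ^ H * (T ^ H - s ^ H) + s ^ H * (T ^ H - t ^ H)|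
          ≤ |T ^ H * (T ^ H - s ^ H)| + |s ^ H * (T ^ H - t ^ H)| := abs_add_le _ _
        _ = T ^ H * |T ^ H - s ^ H| + s ^ H * |T ^ H - t ^ H| := by
            rw [abs_mul, abs_mul, abs_of_nonneg hTH.le, abs_of_nonneg hsH0]
        _ ≤ T ^ H * (L₃ * δ) + T ^ H * (L₃ * δ) := by
            have e1 : |T ^ H - s ^ H| ≤ L₃ * δ := by rw [abs_sub_comm]; exact hls
            have e2 : |T ^ H - t ^ H| ≤ L₃ * δ := by rw [abs_sub_comm]; exact hlt
            have := mul_le_mul_of_nonneg_left e1 hTH.le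
            have h2 := mul_le_mul hsT e2 (abs_nonneg _) hTH.le
            linarith
        _ = 2 * T ^ H * L₃ * δ := by ring
    rw [abs_div, abs_of_pos (by positivity : (0:ℝ) < 2 * c * (t ^ H * s ^ H) * T ^ (2*H))]
    have hdle : 2 * c * m * T ^ (2*H) ≤ 2 * c * (t ^ H * s ^ H) * T ^ (2*H) := by
      have := mul_le_mul_of_nonneg_left hmle (by positivity : (0:ℝ) ≤ 2 * c)
      nlinarith
    calc |T ^ (2*H) - t ^ H * s ^ H| / (2 * c * (t ^ H * s ^ H) * T ^ (2*H))
        ≤ (2 * T ^ H * L₃ * δ) / (2 * c * m * T ^ (2*H)) :=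
          div_le_div₀ (by positivity) hnum (by positivity) hdle
      _ = C₁ * δ := by rw [hC₁]; ring
      _ ≤ C₁ * δ₂ := mul_le_mul_of_nonneg_left hδ2 hC₁0
      _ ≤ (C₁ + 1) * δ₂ := by nlinarith
      _ = ε/2 := by rw [hδ₂]; field_simp
  have second : |(c * t ^ H * s ^ H - t ^ (2*H) - s ^ (2*H) + (t + s) ^ (2*H) / 2) /
      ((c * (t ^ H * s ^ H)) * |t - s| ^ (2*H))| ≤ ε/2 := by
    have hG := hKb t htI s hsI
    have hsplit : |s - t| * |s - t| = |t - s| ^ (2*H) * |t - s| ^ (2 - 2*H) := by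
      rw [abs_sub_comm s t, ← Real.rpow_add hu0, show 2*H + (2 - 2*H) = 2 by ring,
        show (2:ℝ) = ((2:ℕ):ℝ) by norm_num, Real.rpow_natCast]
      ring
    rw [hsplit] at hG
    have hXδ : |t - s| ^ (2 - 2*H) ≤ ε * c * m / (2 * (K + 1)) := by
      have h1 : |t - s| ^ (2 - 2*H) ≤ δ₃ ^ (2 - 2*H) :=
        Real.rpow_le_rpow (abs_nonneg _) (hts.le.trans hδ3) hq.le
      have h2 : δ₃ ^ (2 - 2*H) = ε * c * m / (2 * (K + 1)) := by
        rw [hδ₃]; exact Real.rpow_inv_rpow hεcm.le hq.ne'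
      linarith
    rw [abs_div, abs_of_pos (by positivity : (0:ℝ) < (c * (t ^ H * s ^ H)) * |t - s| ^ (2*H))]
    have hnum2 : |c * t ^ H * s ^ H - t ^ (2*H) - s ^ (2*H) + (t + s) ^ (2*H) / 2|
        ≤ (K * |t - s| ^ (2 - 2*H)) * |t - s| ^ (2*H) := by
      calc _ ≤ K * (|t - s| ^ (2*H) * |t - s| ^ (2 - 2*H)) := hG
        _ = (K * |t - s| ^ (2 - 2*H)) * |t - s| ^ (2*H) := by ring
    have hdle2 : (c * m) * |t - s| ^ (2*H) ≤ (c * (t ^ H * s ^ H)) * |t - s| ^ (2*H) := by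
      have := mul_le_mul_of_nonneg_left hmle hc0.le
      nlinarith
    calc |c * t ^ H * s ^ H - t ^ (2*H) - s ^ (2*H) + (t + s) ^ (2*H) / 2| /
          ((c * (t ^ H * s ^ H)) * |t - s| ^ (2*H))
        ≤ ((K * |t - s| ^ (2 - 2*H)) * |t - s| ^ (2*H)) / ((c * m) * |t - s| ^ (2*H)) :=
          div_le_div₀ (by positivity) hnum2 (by positivity) hdle2
      _ = (K * |t - s| ^ (2 - 2*H)) / (c * m) := by
          rw [mul_div_mul_right _ _ hu.ne']
      _ ≤ (K * (ε * c * m / (2 * (K + 1)))) / (c * m) :=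
          (div_le_div_iff_of_pos_right (by positivity)).mpr (mul_le_mul_of_nonneg_left hXδ hK0)
      _ ≤ ((K + 1) * (ε * c * m / (2 * (K + 1)))) / (c * m) :=
          (div_le_div_iff_of_pos_right (by positivity)).mpr
            (mul_le_mul_of_nonneg_right (by linarith : K ≤ K + 1) hεcm.le)
      _ = ε/2 := by field_simp
  calc |(T ^ (2*H) - t ^ H * s ^ H) / (2 * c * (t ^ H * s ^ H) * T ^ (2*H))
        + (c * t ^ H * s ^ H - t ^ (2*H) - s ^ (2*H) + (t + s) ^ (2*H) / 2) /
            ((c * (t ^ H * s ^ H)) * |t - s| ^ (2*H))| ≤ _ + _ := abs_add_le _ _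
    _ ≤ ε/2 + ε/2 := add_le_add first second
    _ = ε := by ring
end

section
/- For all K ∈ (0,1], H ∈ (0,1), and all s, t ≥ 0: t^{2KH} + s^{2KH} − 2^{1−K}((t^{2H}+s^{2H})^K − |t−s|^{2KH}) ≤ 2^{1−K} |t−s|^{2KH}. (Equivalently, the second moment of the increment of a bifractional Brownian motion, E[(B_{K,H}(t)−B_{K,H}(s))²] = t^{2KH}+s^{2KH}−2R(t,s) with R(t,s) = 2^{−K}((t^{2H}+s^{2H})^K − |t−s|^{2KH}), is at most 2^{1−K}|t−s|^{2KH}.) -/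
open Set

lemma key_ineq (K : ℝ) (hK0 : 0 < K) (hK1 : K ≤ 1) (a b : NNReal) :
    a ^ K + b ^ K ≤ (2 : NNReal) ^ (1 - K) * (a + b) ^ K := by
  have hp : (1:ℝ) ≤ 1 / K := (one_le_div hK0).mpr hK1
  have h := NNReal.rpow_add_le_mul_rpow_add_rpow (a ^ K) (b ^ K) hp
  have hK : K ≠ 0 := hK0.ne'
  simp only [← NNReal.rpow_mul, mul_one_div, div_self hK, NNReal.rpow_one] at h
  have h2 := NNReal.rpow_le_rpow h hK0.le
  rwa [← NNReal.rpow_mul, one_div_mul_cancel hK, NNReal.rpow_one,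
    NNReal.mul_rpow, ← NNReal.rpow_mul, sub_mul, one_div_mul_cancel hK,
    one_mul] at h2

lemma key_ineq_real (K : ℝ) (hK0 : 0 < K) (hK1 : K ≤ 1) (a b : ℝ)
    (ha : 0 ≤ a) (hb : 0 ≤ b) :
    a ^ K + b ^ K ≤ (2 : ℝ) ^ (1 - K) * (a + b) ^ K := by
  have h := key_ineq K hK0 hK1 a.toNNReal b.toNNReal
  have := NNReal.coe_le_coe.mpr h
  push_cast at this
  rwa [Real.coe_toNNReal a ha, Real.coe_toNNReal b hb] at this

/-- the second moment of the increment of a bifractional Brownian motion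
is bounded by `2^{1-K} |t-s|^{2KH}`. -/
theorem stmt7 (K H : ℝ) (hK : K ∈ Set.Ioc (0:ℝ) 1) (hH : H ∈ Set.Ioo (0:ℝ) 1)
    (s t : ℝ) (hs : 0 ≤ s) (ht : 0 ≤ t) :
    t ^ (2 * K * H) + s ^ (2 * K * H) -
        (2:ℝ) ^ (1 - K) * ((t ^ (2 * H) + s ^ (2 * H)) ^ K - |t - s| ^ (2 * K * H)) ≤
      (2:ℝ) ^ (1 - K) * |t - s| ^ (2 * K * H) := by
  have key : t ^ (2 * K * H) + s ^ (2 * K * H) ≤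
      (2:ℝ) ^ (1 - K) * (t ^ (2 * H) + s ^ (2 * H)) ^ K := by
    have h1 : (2 : ℝ) * K * H = (2 * H) * K := by ring
    rw [h1, Real.rpow_mul ht, Real.rpow_mul hs]
    exact key_ineq_real K hK.1 hK.2 _ _ (Real.rpow_nonneg ht _) (Real.rpow_nonneg hs _)
  linarith
end

section
/- For all H ∈ (0,1) and all real numbers 0 ≤ s ≤ t: (t+s)^{2H} + (t−s)^{2H} − 2^{2H−1}(t^{2H} + s^{2H}) ≤ 2 (t−s)^{2H}. (Equivalently, the second moment of the increment of a sub-fractional Brownian motion, E[(S_H(t)−S_H(s))²] = (2−2^{2H−1})(t^{2H}+s^{2H}) − 2R(t,s) with R(t,s) = t^{2H}+s^{2H}−((t+s)^{2H}+(t−s)^{2H})/2, is at most 2(t−s)^{2H}.) -/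
open Set

lemma aux_rpow_add_le_add_rpow (x y p : ℝ) (hx : 0 ≤ x) (hy : 0 ≤ y)
    (hp0 : 0 ≤ p) (hp1 : p ≤ 1) : (x + y) ^ p ≤ x ^ p + y ^ p := by
  have h := NNReal.rpow_add_le_add_rpow x.toNNReal y.toNNReal hp0 hp1
  have := NNReal.coe_le_coe.2 h
  simpa [NNReal.coe_rpow, Real.coe_toNNReal _ hx, Real.coe_toNNReal _ hy,
    Real.coe_toNNReal _ (add_nonneg hx hy)] using this

lemma aux_rpow_add_le_mul (x y p : ℝ) (hx : 0 ≤ x) (hy : 0 ≤ y)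
    (hp : 1 ≤ p) : (x + y) ^ p ≤ 2 ^ (p - 1) * (x ^ p + y ^ p) := by
  have h := NNReal.rpow_add_le_mul_rpow_add_rpow x.toNNReal y.toNNReal hp
  have := NNReal.coe_le_coe.2 h
  simpa [NNReal.coe_rpow, Real.coe_toNNReal _ hx, Real.coe_toNNReal _ hy,
    Real.coe_toNNReal _ (add_nonneg hx hy)] using this

/-- the second moment of the increment of a sub-fractional Brownian motion
is bounded by `2 (t-s)^{2H}` for `0 ≤ s ≤ t`. -/
theorem stmt8 (H : ℝ) (hH : H ∈ Set.Ioo (0:ℝ) 1) (s t : ℝ) (hs : 0 ≤ s) (hst : s ≤ t) :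
    (t + s) ^ (2 * H) + (t - s) ^ (2 * H) -
        (2:ℝ) ^ (2 * H - 1) * (t ^ (2 * H) + s ^ (2 * H)) ≤
      2 * (t - s) ^ (2 * H) := by
  obtain ⟨hH0, hH1⟩ := hH
  have ht : 0 ≤ t := hs.trans hst
  have hts : 0 ≤ t - s := sub_nonneg.2 hst
  set a := 2 * H with ha
  have ha0 : 0 < a := by positivity
  suffices h : (t + s) ^ a ≤ (t - s) ^ a + 2 ^ (a - 1) * (t ^ a + s ^ a) by linarith
  rcases le_total a 1 with hle | hge
  · have key : (t + s) ^ a ≤ (t - s) ^ a + (2 * s) ^ a := by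
      have := aux_rpow_add_le_add_rpow (t - s) (2 * s) a hts (by linarith) ha0.le hle
      have e : t - s + 2 * s = t + s := by ring
      rwa [e] at this
    have h2 : (2 * s) ^ a = 2 ^ a * s ^ a := Real.mul_rpow (by norm_num) hs
    have h3 : (2:ℝ) ^ a = 2 ^ (a - 1) * 2 := by
      rw [← Real.rpow_add_one (by norm_num : (2:ℝ) ≠ 0)]
      ring_nf
    have h4 : s ^ a ≤ t ^ a := Real.rpow_le_rpow hs hst ha0.le
    have h5 : (0:ℝ) < 2 ^ (a - 1) := Real.rpow_pos_of_pos (by norm_num) _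
    have h6 : 2 ^ (a - 1) * s ^ a ≤ 2 ^ (a - 1) * t ^ a :=
      mul_le_mul_of_nonneg_left h4 h5.le
    have h7 : 2 ^ a * s ^ a = 2 ^ (a - 1) * s ^ a + 2 ^ (a - 1) * s ^ a := by
      rw [h3]; ring
    linarith [key, h2, h6, h7]
  · have key : (t + s) ^ a ≤ 2 ^ (a - 1) * (t ^ a + s ^ a) :=
      aux_rpow_add_le_mul t s a ht hs hge
    have : (0:ℝ) ≤ (t - s) ^ a := Real.rpow_nonneg hts a
    linarith
end

section
/- Let T > 0, n ≥ 1, and for each i ∈ {1,…,n} let λ_i > 0, σ̃_i > 0, A_i > 0, β_i > 0, and let σ_i : [0,T) → (0,∞) satisfy σ_i(t) = σ̃_i − A_i(T−t)^{β_i} + o((T−t)^{β_i}) as t → T⁻. Set β = min_{i≤n} β_i, σ̃ = (∑_{i=1}^n λ_i² σ̃_i²)^{1/2}, and Ñ = ∑_{i: β_i = β} λ_i² σ̃_i A_i. Then the aggregate standard deviation σ_X(t) = (∑_{i=1}^n λ_i² σ_i(t)²)^{1/2} satisfies σ_X(t) = σ̃ − (Ñ/σ̃)(T−t)^{β} + o((T−t)^{β})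 as t → T⁻; that is, lim_{t→T⁻} (σ̃ − σ_X(t))/(T−t)^{β} = Ñ/σ̃. -/
open Filter Set
open scoped Classical

/-- first-order expansion of the aggregate standard deviation
`σ_X(t) = (∑ λ_i² σ_i(t)²)^{1/2}` near `T`, given expansions
`σ_i(t) = σ̃_i - A_i (T-t)^{β_i} + o((T-t)^{β_i})`:
`(σ̃ - σ_X(t))/(T-t)^β → Ñ/σ̃` as `t → T⁻`, where `β = min_i β_i`,
`σ̃ = (∑ λ_i² σ̃_i²)^{1/2}` and `Ñ = ∑_{i : β_i = β} λ_i² σ̃_i A_i`. -/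
theorem stmt9 (T : ℝ) (hT : 0 < T) (n : ℕ) [NeZero n]
    (lam sigt A beta : Fin n → ℝ) (sig : Fin n → ℝ → ℝ)
    (hlam : ∀ i, 0 < lam i) (hsigt : ∀ i, 0 < sigt i)
    (hA : ∀ i, 0 < A i) (hbeta : ∀ i, 0 < beta i)
    (hsig_pos : ∀ i, ∀ t ∈ Set.Ico (0:ℝ) T, 0 < sig i t)
    (hexp : ∀ i, Tendsto
      (fun t => (sig i t - (sigt i - A i * (T - t) ^ beta i)) / (T - t) ^ beta i)
      (nhdsWithin T (Set.Iio T)) (nhds 0)) :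
    Tendsto (fun t =>
        (Real.sqrt (∑ i, lam i ^ 2 * sigt i ^ 2) -
            Real.sqrt (∑ i, lam i ^ 2 * sig i t ^ 2)) / (T - t) ^ (⨅ j, beta j))
      (nhdsWithin T (Set.Iio T))
      (nhds ((∑ i ∈ Finset.univ.filter fun i => beta i = ⨅ j, beta j,
            lam i ^ 2 * sigt i * A i) /
          Real.sqrt (∑ i, lam i ^ 2 * sigt i ^ 2))) := by
  set l := nhdsWithin T (Set.Iio T) with hl
  set β := ⨅ j, beta j with hβdef
  have hbdd : BddBelow (Set.range beta) := (Set.finite_range _).bddBelow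
  have hβle : ∀ i, β ≤ beta i := fun i => ciInf_le hbdd i
  obtain ⟨i0, hi0⟩ := Finite.exists_min beta
  have hβeq : β = beta i0 := le_antisymm (hβle i0) (le_ciInf hi0)
  have hβpos : 0 < β := hβeq ▸ hbeta i0
  have hTt : Tendsto (fun t => T - t) l (nhdsWithin 0 (Set.Ioi 0)) := by
    apply tendsto_nhdsWithin_of_tendsto_nhds_of_eventually_within
    · have h1 : Tendsto (fun t : ℝ => T - t) (nhds T) (nhds (T - T)) :=
        tendsto_const_nhds.sub tendsto_id
      simpa using h1.mono_left nhdsWithin_le_nhds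
    · exact eventually_nhdsWithin_of_forall fun t ht => by
        simp only [Set.mem_Iio] at ht
        simpa using sub_pos.mpr ht
  have hpos : ∀ᶠ t in l, 0 < T - t := hTt.eventually eventually_mem_nhdsWithin
  have hrpow0 : ∀ c : ℝ, 0 < c → Tendsto (fun t => (T - t) ^ c) l (nhds 0) := by
    intro c hc
    have h1 := (Real.continuousAt_rpow_const 0 c (Or.inr hc.le)).tendsto
    have h2 : Tendsto (fun t => (T - t) ^ c) l (nhds ((0:ℝ) ^ c)) :=
      h1.comp (hTt.mono_right nhdsWithin_le_nhds)
    simpa [Real.zero_rpow hc.ne'] using h2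
  -- limit of (sigt i - sig i t)/(T-t)^β
  have hg : ∀ i, Tendsto (fun t => (sigt i - sig i t) / (T - t) ^ β) l
      (nhds (if beta i = β then A i else 0)) := by
    intro i
    have hrw : ∀ᶠ t in l, (A i - (sig i t - (sigt i - A i * (T - t) ^ beta i)) /
        (T - t) ^ beta i) * (T - t) ^ (beta i - β)
        = (sigt i - sig i t) / (T - t) ^ β := by
      filter_upwards [hpos] with t ht
      have h1 : (0:ℝ) < (T - t) ^ beta i := Real.rpow_pos_of_pos ht _
      have h2 : (0:ℝ) < (T - t) ^ β := Real.rpow_pos_of_pos ht _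
      rw [Real.rpow_sub ht]
      field_simp
      ring
    have hf1 : Tendsto (fun t => A i - (sig i t - (sigt i - A i * (T - t) ^ beta i)) /
        (T - t) ^ beta i) l (nhds (A i)) := by
      simpa using tendsto_const_nhds.sub (hexp i)
    by_cases h : beta i = β
    · have hf2 : Tendsto (fun t => (T - t) ^ (beta i - β)) l (nhds 1) := by
        simp only [h, sub_self, Real.rpow_zero]
        exact tendsto_const_nhds
      have := hf1.mul hf2
      simp only [mul_one] at this
      simpa [h] using this.congr' hrw
    · have hlt : 0 < beta i - β := sub_pos.mpr (lt_of_le_of_ne (hβle i) (Ne.symm h))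
      have := hf1.mul (hrpow0 _ hlt)
      simp only [mul_zero] at this
      simpa [h] using this.congr' hrw
  -- sig i t → sigt i
  have hslim : ∀ i, Tendsto (fun t => sig i t) l (nhds (sigt i)) := by
    intro i
    have h1 := (hg i).mul (hrpow0 β hβpos)
    have h2 : Tendsto (fun t => sigt i - (sigt i - sig i t) / (T - t) ^ β * (T - t) ^ β)
        l (nhds (sigt i - (if beta i = β then A i else 0) * 0)) :=
      tendsto_const_nhds.sub h1
    have hrw : ∀ᶠ t in l, sigt i - (sigt i - sig i t) / (T - t) ^ β * (T - t) ^ β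
        = sig i t := by
      filter_upwards [hpos] with t ht
      have h2 : (0:ℝ) < (T - t) ^ β := Real.rpow_pos_of_pos ht _
      rw [div_mul_cancel₀ _ h2.ne']
      ring
    simpa using h2.congr' hrw
  have ha : 0 < ∑ i, lam i ^ 2 * sigt i ^ 2 :=
    Finset.sum_pos (fun i _ => by have := hlam i; have := hsigt i; positivity)
      Finset.univ_nonempty
  have hb : ∀ t, 0 ≤ ∑ i, lam i ^ 2 * sig i t ^ 2 :=
    fun t => Finset.sum_nonneg fun i _ => by positivity
  -- numerator limit
  have hN : Tendsto (fun t =>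
      ((∑ i, lam i ^ 2 * sigt i ^ 2) - ∑ i, lam i ^ 2 * sig i t ^ 2) / (T - t) ^ β)
      l (nhds (∑ i, lam i ^ 2 * (sigt i + sigt i) * (if beta i = β then A i else 0))) := by
    have hrw : ∀ᶠ t in l,
        (∑ i, lam i ^ 2 * (sigt i + sig i t) * ((sigt i - sig i t) / (T - t) ^ β))
        = ((∑ i, lam i ^ 2 * sigt i ^ 2) - ∑ i, lam i ^ 2 * sig i t ^ 2) / (T - t) ^ β := by
      filter_upwards [hpos] with t ht
      have h2 : (0:ℝ) < (T - t) ^ β := Real.rpow_pos_of_pos ht _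
      rw [← Finset.sum_sub_distrib, Finset.sum_div]
      refine Finset.sum_congr rfl fun i _ => ?_
      field_simp
      ring
    have hsum : Tendsto (fun t =>
        ∑ i, lam i ^ 2 * (sigt i + sig i t) * ((sigt i - sig i t) / (T - t) ^ β))
        l (nhds (∑ i, lam i ^ 2 * (sigt i + sigt i) * (if beta i = β then A i else 0))) := by
      refine tendsto_finset_sum _ fun i _ => ?_
      exact (tendsto_const_nhds.mul (tendsto_const_nhds.add (hslim i))).mul (hg i)
    exact hsum.congr' hrw
  -- denominator limit
  have hden : Tendsto (fun t => Real.sqrt (∑ i, lam i ^ 2 * sigt i ^ 2) +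
      Real.sqrt (∑ i, lam i ^ 2 * sig i t ^ 2)) l
      (nhds (Real.sqrt (∑ i, lam i ^ 2 * sigt i ^ 2) +
        Real.sqrt (∑ i, lam i ^ 2 * sigt i ^ 2))) := by
    refine tendsto_const_nhds.add ?_
    exact (Real.continuous_sqrt.tendsto _).comp
      (tendsto_finset_sum _ fun i _ =>
        tendsto_const_nhds.mul ((hslim i).pow 2))
  have hsqa : 0 < Real.sqrt (∑ i, lam i ^ 2 * sigt i ^ 2) := Real.sqrt_pos.mpr ha
  have hdne : Real.sqrt (∑ i, lam i ^ 2 * sigt i ^ 2) +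
      Real.sqrt (∑ i, lam i ^ 2 * sigt i ^ 2) ≠ 0 := by positivity
  have hmain := hN.div hden hdne
  have hrw : ∀ᶠ t in l,
      (((∑ i, lam i ^ 2 * sigt i ^ 2) - ∑ i, lam i ^ 2 * sig i t ^ 2) / (T - t) ^ β) /
        (Real.sqrt (∑ i, lam i ^ 2 * sigt i ^ 2) +
          Real.sqrt (∑ i, lam i ^ 2 * sig i t ^ 2))
      = (Real.sqrt (∑ i, lam i ^ 2 * sigt i ^ 2) -
          Real.sqrt (∑ i, lam i ^ 2 * sig i t ^ 2)) / (T - t) ^ β := by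
    filter_upwards [hpos] with t ht
    have h2 : (0:ℝ) < (T - t) ^ β := Real.rpow_pos_of_pos ht _
    have hsqb : 0 ≤ Real.sqrt (∑ i, lam i ^ 2 * sig i t ^ 2) := Real.sqrt_nonneg _
    have hd : 0 < Real.sqrt (∑ i, lam i ^ 2 * sigt i ^ 2) +
        Real.sqrt (∑ i, lam i ^ 2 * sig i t ^ 2) := by linarith
    have hkey : Real.sqrt (∑ i, lam i ^ 2 * sigt i ^ 2) -
        Real.sqrt (∑ i, lam i ^ 2 * sig i t ^ 2)
        = ((∑ i, lam i ^ 2 * sigt i ^ 2) - ∑ i, lam i ^ 2 * sig i t ^ 2) /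
          (Real.sqrt (∑ i, lam i ^ 2 * sigt i ^ 2) +
            Real.sqrt (∑ i, lam i ^ 2 * sig i t ^ 2)) := by
      rw [eq_div_iff hd.ne']
      have e1 : Real.sqrt (∑ i, lam i ^ 2 * sigt i ^ 2) ^ 2
          = ∑ i, lam i ^ 2 * sigt i ^ 2 := Real.sq_sqrt ha.le
      have e2 : Real.sqrt (∑ i, lam i ^ 2 * sig i t ^ 2) ^ 2
          = ∑ i, lam i ^ 2 * sig i t ^ 2 := Real.sq_sqrt (hb t)
      nlinarith [e1, e2]
    rw [hkey]
    rw [div_div, div_div, mul_comm]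
  have hfinal := hmain.congr' hrw
  convert hfinal using 2
  have hnum : (∑ i, lam i ^ 2 * (sigt i + sigt i) * (if beta i = β then A i else 0))
      = 2 * ∑ i ∈ Finset.univ.filter fun i => beta i = β, lam i ^ 2 * sigt i * A i := by
    rw [Finset.sum_filter, Finset.mul_sum]
    refine Finset.sum_congr rfl fun i _ => ?_
    split_ifs <;> ring
  rw [hnum]
  rw [show Real.sqrt (∑ i, lam i ^ 2 * sigt i ^ 2) +
      Real.sqrt (∑ i, lam i ^ 2 * sigt i ^ 2)
      = 2 * Real.sqrt (∑ i, lam i ^ 2 * sigt i ^ 2) by ring]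
  rw [mul_div_mul_left _ _ (two_ne_zero)]
end

section
/- Let T > 0, n ≥ 1, λ_i > 0 for i ≤ n. Let σ_i : [0,T] → (0,∞) be continuously differentiable functions, and let r_i : [0,T]² → ℝ be symmetric functions with r_i(t,t) = 1, such that for constants D_i > 0 and α_i ∈ (0,2), lim (1 − r_i(s,t))/|t−s|^{α_i} = D_i as min(s,t) → T with s ≠ t (i.e., for every ε > 0 there is δ > 0 such that this ratio is within ε of D_i whenever s,t ∈ (T−δ,T], s ≠ t). Set α = min_{i≤n} α_i, σ_X(t) = (∑_{i=1}^n λ_i² σ_i(t)²)^{1/2}, R(s,t) = ∑_{i=1}^n λ_i² σ_i(s) σ_i(t) r_i(s,t), and G̃ = ∑_{i: α_i = α} λ_i² D_i σ_i(T)². Then lim (1 − R(s,t)/(σ_X(s)σ_X(t)))/|t−s|^{α} = G̃/σ_X(T)² as min(s,t) → T with s ≠ t. -/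
open Filter Set
open scoped Classical
open Topology

/-! Put `a_i = λ_i σ_i(s)`, `b_i = λ_i σ_i(t)`. Then
`1 - R(s,t)/(σ_X(s)σ_X(t)) = (‖a‖‖b‖ - ⟨a,b⟩ + ∑ a_i b_i (1 - r_i(s,t))) / (‖a‖‖b‖)`.
The Cauchy–Schwarz defect `‖a‖‖b‖ - ⟨a,b⟩` lies between `0` and `‖a - b‖²/2`, which is
`O(|t-s|²)` because the `σ_i` are Lipschitz, hence `o(|t-s|^α)` as `α < 2`. Divided by `|t-s|^α`,
the `i`-th term of the sum is `λ_i²σ_i(s)σ_i(t) · (1 - r_i)/|t-s|^{α_i} · |t-s|^{α_i-α}`, which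
tends to `λ_i² σ_i(T)² D_i` when `α_i = α` and to `0` when `α_i > α`. -/

lemma nhdsLE_basis_Ioc_sub (T : ℝ) :
    (𝓝[≤] T).HasBasis (fun δ : ℝ => 0 < δ) fun δ => Ioc (T - δ) T :=
  (nhdsLE_basis T).to_hasBasis (fun l hl => ⟨T - l, sub_pos.2 hl, by simp⟩)
    fun δ hδ => ⟨T - δ, by linarith, subset_rfl⟩

/-- The limit `min(s,t) → T` over `s, t ≤ T` with `s ≠ t`. -/
noncomputable def nhdsLEOffDiag (T : ℝ) : Filter (ℝ × ℝ) :=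
  (𝓝[≤] T ×ˢ 𝓝[≤] T) ⊓ 𝓟 {p | p.1 ≠ p.2}

section nhdsLEOffDiag

variable {T : ℝ}

lemma tendsto_nhdsLEOffDiag_iff {f : ℝ → ℝ → ℝ} {L : ℝ} :
    Tendsto (fun p => f p.1 p.2) (nhdsLEOffDiag T) (𝓝 L) ↔
      ∀ ε > 0, ∃ δ > 0, ∀ s t : ℝ, s ∈ Ioc (T - δ) T → t ∈ Ioc (T - δ) T → s ≠ t →
        |f s t - L| ≤ ε := by
  rw [nhdsLEOffDiag, ((nhdsLE_basis_Ioc_sub T).prod_self.inf_principal _).tendsto_iff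
    Metric.nhds_basis_closedBall]
  simp only [mem_inter_iff, mem_prod, mem_ofPred_eq, Metric.mem_closedBall, Real.dist_eq,
    Prod.forall, and_imp]

lemma tendsto_fst_nhdsLEOffDiag : Tendsto Prod.fst (nhdsLEOffDiag T) (𝓝[≤] T) :=
  tendsto_fst.mono_left inf_le_left

lemma tendsto_snd_nhdsLEOffDiag : Tendsto Prod.snd (nhdsLEOffDiag T) (𝓝[≤] T) :=
  tendsto_snd.mono_left inf_le_left

lemma eventually_mem_Icc_nhdsLEOffDiag {a : ℝ} (ha : a < T) :
    ∀ᶠ p in nhdsLEOffDiag T, p.1 ∈ Icc a T ∧ p.2 ∈ Icc a T ∧ 0 < |p.2 - p.1| := by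
  have hIcc : Icc a T ∈ 𝓝[≤] T := Icc_mem_nhdsLE ha
  filter_upwards [tendsto_fst_nhdsLEOffDiag hIcc, tendsto_snd_nhdsLEOffDiag hIcc,
    mem_inf_of_right (mem_principal_self _)] with p hs ht hst
  exact ⟨hs, ht, abs_pos.2 (sub_ne_zero.2 (Ne.symm hst))⟩

lemma Filter.Tendsto.sqrt_mul_sqrt_nhdsLEOffDiag {S : ℝ → ℝ} {L : ℝ}
    (hS : Tendsto S (𝓝[≤] T) (𝓝 L)) (hL : 0 ≤ L) :
    Tendsto (fun p : ℝ × ℝ => √(S p.1) * √(S p.2)) (nhdsLEOffDiag T) (𝓝 L) := by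
  simpa [Real.mul_self_sqrt hL] using
    (hS.comp tendsto_fst_nhdsLEOffDiag).sqrt.mul (hS.comp tendsto_snd_nhdsLEOffDiag).sqrt

lemma tendsto_abs_sub_nhdsLEOffDiag :
    Tendsto (fun p : ℝ × ℝ => |p.2 - p.1|) (nhdsLEOffDiag T) (𝓝 0) := by
  have h := (((tendsto_snd_nhdsLEOffDiag (T := T)).mono_right nhdsWithin_le_nhds).sub
    ((tendsto_fst_nhdsLEOffDiag (T := T)).mono_right nhdsWithin_le_nhds)).abs
  simpa using h

lemma Filter.Tendsto.mul_abs_sub_rpow {g : ℝ × ℝ → ℝ} {L γ : ℝ}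
    (hg : Tendsto g (nhdsLEOffDiag T) (𝓝 L)) (hγ : 0 ≤ γ) :
    Tendsto (fun p => g p * |p.2 - p.1| ^ γ) (nhdsLEOffDiag T) (𝓝 (if γ = 0 then L else 0)) := by
  rcases hγ.eq_or_lt with rfl | hγ
  · simpa using hg
  · have h := ((Real.continuousAt_rpow_const 0 γ (Or.inr hγ.le)).tendsto.comp
      (tendsto_abs_sub_nhdsLEOffDiag (T := T)))
    rw [Real.zero_rpow hγ.ne'] at h
    simpa [hγ.ne'] using hg.mul h

lemma tendsto_mul_mul_mul_abs_sub_rpow {σ : ℝ → ℝ} {q : ℝ → ℝ → ℝ} {c σT D γ : ℝ}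
    (hσ : Tendsto σ (𝓝[≤] T) (𝓝 σT)) (hq : Tendsto (fun p => q p.1 p.2) (nhdsLEOffDiag T) (𝓝 D))
    (hγ : 0 ≤ γ) :
    Tendsto (fun p : ℝ × ℝ => c * σ p.1 * σ p.2 * q p.1 p.2 * |p.2 - p.1| ^ γ) (nhdsLEOffDiag T)
      (𝓝 (if γ = 0 then c * σT * σT * D else 0)) :=
  ((((hσ.comp tendsto_fst_nhdsLEOffDiag).const_mul c).mul
    (hσ.comp tendsto_snd_nhdsLEOffDiag)).mul hq).mul_abs_sub_rpow hγ

end nhdsLEOffDiag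

section CauchySchwarzDefect

variable {ι : Type*} (s : Finset ι) (c a b : ι → ℝ)

lemma sum_mul_mul_le_sqrt_mul_sqrt (hc : ∀ i ∈ s, 0 ≤ c i) :
    ∑ i ∈ s, c i * a i * b i ≤ √(∑ i ∈ s, c i * a i ^ 2) * √(∑ i ∈ s, c i * b i ^ 2) := by
  have h := Real.sum_mul_le_sqrt_mul_sqrt s (fun i => √(c i) * a i) (fun i => √(c i) * b i)
  have hsq : ∀ i ∈ s, √(c i) ^ 2 = c i := fun i hi => Real.sq_sqrt (hc i hi)
  calc ∑ i ∈ s, c i * a i * b i = ∑ i ∈ s, √(c i) * a i * (√(c i) * b i) :=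
        Finset.sum_congr rfl fun i hi => by linear_combination (a i * b i) * (hsq i hi).symm
    _ ≤ _ := h
    _ = _ := by
        congr 2 <;> refine Finset.sum_congr rfl fun i hi => ?_ <;> rw [mul_pow, hsq i hi]

lemma sqrt_mul_sqrt_sub_sum_mul_mul_le (hc : ∀ i ∈ s, 0 ≤ c i) :
    √(∑ i ∈ s, c i * a i ^ 2) * √(∑ i ∈ s, c i * b i ^ 2) - ∑ i ∈ s, c i * a i * b i
      ≤ (∑ i ∈ s, c i * (a i - b i) ^ 2) / 2 := by
  have hexpand : ∑ i ∈ s, c i * (a i - b i) ^ 2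
      = ∑ i ∈ s, c i * a i ^ 2 + ∑ i ∈ s, c i * b i ^ 2 - 2 * ∑ i ∈ s, c i * a i * b i := by
    rw [Finset.mul_sum, ← Finset.sum_add_distrib, ← Finset.sum_sub_distrib]
    exact Finset.sum_congr rfl fun i _ => by ring
  have hA := Real.sq_sqrt (Finset.sum_nonneg fun i hi => mul_nonneg (hc i hi) (sq_nonneg (a i)))
  have hB := Real.sq_sqrt (Finset.sum_nonneg fun i hi => mul_nonneg (hc i hi) (sq_nonneg (b i)))
  -- the gap is `(√(∑ c a²) - √(∑ c b²))² / 2`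
  nlinarith [sq_nonneg (√(∑ i ∈ s, c i * a i ^ 2) - √(∑ i ∈ s, c i * b i ^ 2))]

end CauchySchwarzDefect

lemma tendsto_sqrt_mul_sqrt_sub_sum_div_rpow {ι : Type*} [Fintype ι] {a T β : ℝ} (hT : a < T)
    (hβ : β < 2) (c : ι → ℝ) (hc : ∀ i, 0 ≤ c i) (σ : ι → ℝ → ℝ)
    (hσ : ∀ i, ContDiffOn ℝ 1 (σ i) (Icc a T)) :
    Tendsto (fun p : ℝ × ℝ => (√(∑ i, c i * σ i p.1 ^ 2) * √(∑ i, c i * σ i p.2 ^ 2)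
      - ∑ i, c i * σ i p.1 * σ i p.2) / |p.2 - p.1| ^ β) (nhdsLEOffDiag T) (𝓝 0) := by
  choose K hK using fun i =>
    (hσ i).exists_lipschitzOnWith one_ne_zero (convex_Icc a T) isCompact_Icc
  set C := (∑ i, c i * (K i : ℝ) ^ 2) / 2
  have hbound : ∀ s ∈ Icc a T, ∀ t ∈ Icc a T,
      √(∑ i, c i * σ i s ^ 2) * √(∑ i, c i * σ i t ^ 2) - ∑ i, c i * σ i s * σ i t
        ≤ C * |t - s| ^ 2 := by
    intro s hs t ht
    have hlip : ∀ i, (σ i s - σ i t) ^ 2 ≤ (K i * |t - s|) ^ 2 := fun i => by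
      rw [← sq_abs, abs_sub_comm t s, ← Real.dist_eq, ← Real.dist_eq]
      exact pow_le_pow_left₀ dist_nonneg ((hK i).dist_le_mul s hs t ht) 2
    calc _ ≤ (∑ i, c i * (σ i s - σ i t) ^ 2) / 2 :=
          sqrt_mul_sqrt_sub_sum_mul_mul_le _ _ _ _ fun i _ => hc i
      _ ≤ (∑ i, c i * (K i * |t - s|) ^ 2) / 2 := by
          gcongr ?_ / 2
          exact Finset.sum_le_sum fun i _ => mul_le_mul_of_nonneg_left (hlip i) (hc i)
      _ = C * |t - s| ^ 2 := by
          rw [div_mul_eq_mul_div, Finset.sum_mul]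
          exact congrArg (· / 2) (Finset.sum_congr rfl fun i _ => by ring)
  have hlim : Tendsto (fun p : ℝ × ℝ => C * |p.2 - p.1| ^ (2 - β)) (nhdsLEOffDiag T) (𝓝 0) := by
    simpa [(sub_pos.2 hβ).ne'] using tendsto_const_nhds.mul_abs_sub_rpow (sub_pos.2 hβ).le
  refine squeeze_zero' ?_ ?_ hlim <;>
    filter_upwards [eventually_mem_Icc_nhdsLEOffDiag hT] with p ⟨hs, ht, hw⟩
  · exact div_nonneg (sub_nonneg.2 (sum_mul_mul_le_sqrt_mul_sqrt _ _ _ _ fun i _ => hc i))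
      (Real.rpow_nonneg hw.le β)
  · rw [Real.rpow_sub hw, Real.rpow_two, mul_div_assoc']
    exact div_le_div_of_nonneg_right (hbound _ hs _ ht) (Real.rpow_nonneg hw.le β)

lemma one_sub_sum_div_sqrt_mul_sqrt_div_rpow {ι : Type*} [Fintype ι] (c a b ρ e : ι → ℝ)
    {w α : ℝ} (hw : 0 < w) (hab : √(∑ i, c i * a i ^ 2) * √(∑ i, c i * b i ^ 2) ≠ 0) :
    (1 - (∑ i, c i * a i * b i * ρ i) / (√(∑ i, c i * a i ^ 2) * √(∑ i, c i * b i ^ 2))) / w ^ α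
      = ((√(∑ i, c i * a i ^ 2) * √(∑ i, c i * b i ^ 2) - ∑ i, c i * a i * b i) / w ^ α
          + ∑ i, c i * a i * b i * ((1 - ρ i) / w ^ e i) * w ^ (e i - α))
        / (√(∑ i, c i * a i ^ 2) * √(∑ i, c i * b i ^ 2)) := by
  have hterm : ∀ i, c i * a i * b i * ((1 - ρ i) / w ^ e i) * w ^ (e i - α)
      = (c i * a i * b i - c i * a i * b i * ρ i) / w ^ α := fun i => by
    rw [Real.rpow_sub hw]
    field_simp [(Real.rpow_pos_of_pos hw (e i)).ne']
  rw [Finset.sum_congr rfl fun i _ => hterm i, ← Finset.sum_div, Finset.sum_sub_distrib]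
  generalize √(∑ i, c i * a i ^ 2) * √(∑ i, c i * b i ^ 2) = P at hab ⊢
  field_simp
  ring

theorem stmt10_general (T : ℝ) (hT : 0 < T) (n : ℕ) [NeZero n]
    (lam D alpha : Fin n → ℝ) (sig : Fin n → ℝ → ℝ) (r : Fin n → ℝ → ℝ → ℝ)
    (hlam : ∀ i, 0 < lam i)
    (halpha : ∀ i, alpha i ∈ Set.Ioo (0:ℝ) 2)
    (hsig_pos : ∀ i, ∀ t ∈ Set.Icc (0:ℝ) T, 0 < sig i t)
    (hsig_smooth : ∀ i, ContDiffOn ℝ 1 (sig i) (Set.Icc (0:ℝ) T))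
    (hr_lim : ∀ i, ∀ ε > 0, ∃ δ > 0, ∀ s t : ℝ,
      s ∈ Set.Ioc (T - δ) T → t ∈ Set.Ioc (T - δ) T → s ≠ t →
      |(1 - r i s t) / |t - s| ^ alpha i - D i| ≤ ε) :
    ∀ ε > 0, ∃ δ > 0, ∀ s t : ℝ,
      s ∈ Set.Ioc (T - δ) T → t ∈ Set.Ioc (T - δ) T → s ≠ t →
      |(1 - (∑ i, lam i ^ 2 * sig i s * sig i t * r i s t) /
            (Real.sqrt (∑ i, lam i ^ 2 * sig i s ^ 2) *
              Real.sqrt (∑ i, lam i ^ 2 * sig i t ^ 2))) / |t - s| ^ (⨅ j, alpha j)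
          - (∑ i ∈ Finset.univ.filter fun i => alpha i = ⨅ j, alpha j,
              lam i ^ 2 * D i * sig i T ^ 2) / (∑ i, lam i ^ 2 * sig i T ^ 2)| ≤ ε := by
  set α := ⨅ j, alpha j
  obtain ⟨i₀, hi₀⟩ : ∃ i, alpha i = α := exists_eq_ciInf_of_finite
  have hα_le : ∀ i, α ≤ alpha i := fun i => ciInf_le (Set.finite_range alpha).bddBelow i
  have hS_pos : ∀ x ∈ Icc 0 T, 0 < ∑ i, lam i ^ 2 * sig i x ^ 2 := fun x hx =>
    Finset.sum_pos (fun i _ => by have := hlam i; have := hsig_pos i x hx; positivity)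
      Finset.univ_nonempty
  have hTmem : T ∈ Icc 0 T := right_mem_Icc.2 hT.le
  have hσT : ∀ i, Tendsto (sig i) (𝓝[≤] T) (𝓝 (sig i T)) := fun i => by
    rw [← nhdsWithin_Icc_eq_nhdsLE hT]
    exact (hsig_smooth i).continuousOn T hTmem
  have hden := (tendsto_finsetSum Finset.univ fun i _ =>
    ((hσT i).pow 2).const_mul (lam i ^ 2)).sqrt_mul_sqrt_nhdsLEOffDiag (hS_pos T hTmem).le
  have hterms := tendsto_finsetSum Finset.univ fun i _ => tendsto_mul_mul_mul_abs_sub_rpow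
    (c := lam i ^ 2) (hσT i) (tendsto_nhdsLEOffDiag_iff.2 (hr_lim i)) (sub_nonneg.2 (hα_le i))
  have hdefect := tendsto_sqrt_mul_sqrt_sub_sum_div_rpow hT (hi₀ ▸ (halpha i₀).2)
    (fun i => lam i ^ 2) (fun i => sq_nonneg _) sig hsig_smooth
  have hlim := (hdefect.add hterms).div hden (hS_pos T hTmem).ne'
  have hL : (0 + ∑ i, if alpha i - α = 0 then lam i ^ 2 * sig i T * sig i T * D i else 0)
      = ∑ i ∈ Finset.univ.filter fun i => alpha i = α, lam i ^ 2 * D i * sig i T ^ 2 := by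
    rw [zero_add, Finset.sum_filter]
    exact Finset.sum_congr rfl fun i _ => by simp only [sub_eq_zero]; split_ifs <;> ring
  rw [hL] at hlim
  refine tendsto_nhdsLEOffDiag_iff.1 (hlim.congr' ?_)
  filter_upwards [eventually_mem_Icc_nhdsLEOffDiag hT] with p ⟨hs, ht, hw⟩
  exact (one_sub_sum_div_sqrt_mul_sqrt_div_rpow _ _ _ _ _ hw
    (mul_pos (Real.sqrt_pos.2 (hS_pos _ hs)) (Real.sqrt_pos.2 (hS_pos _ ht))).ne').symm

/-- first-order expansion of the aggregate correlation near `T`. With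
`R(s,t) = ∑ λ_i² σ_i(s) σ_i(t) r_i(s,t)` and `σ_X(t) = (∑ λ_i² σ_i(t)²)^{1/2}`,
if `1 - r_i(s,t) ∼ D_i |t-s|^{α_i}` as `min(s,t) → T`, then
`1 - R(s,t)/(σ_X(s)σ_X(t)) ∼ (G̃/σ_X(T)²) |t-s|^α` as `min(s,t) → T`, where
`α = min_i α_i` and `G̃ = ∑_{i : α_i = α} λ_i² D_i σ_i(T)²`. -/
theorem stmt10 (T : ℝ) (hT : 0 < T) (n : ℕ) [NeZero n]
    (lam D alpha : Fin n → ℝ) (sig : Fin n → ℝ → ℝ) (r : Fin n → ℝ → ℝ → ℝ)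
    (hlam : ∀ i, 0 < lam i) (hD : ∀ i, 0 < D i)
    (halpha : ∀ i, alpha i ∈ Set.Ioo (0:ℝ) 2)
    (hsig_pos : ∀ i, ∀ t ∈ Set.Icc (0:ℝ) T, 0 < sig i t)
    (hsig_smooth : ∀ i, ContDiffOn ℝ 1 (sig i) (Set.Icc (0:ℝ) T))
    (hr_symm : ∀ i s t, r i s t = r i t s)
    (hr_diag : ∀ i t, r i t t = 1)
    (hr_lim : ∀ i, ∀ ε > 0, ∃ δ > 0, ∀ s t : ℝ,
      s ∈ Set.Ioc (T - δ) T → t ∈ Set.Ioc (T - δ) T → s ≠ t →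
      |(1 - r i s t) / |t - s| ^ alpha i - D i| ≤ ε) :
    ∀ ε > 0, ∃ δ > 0, ∀ s t : ℝ,
      s ∈ Set.Ioc (T - δ) T → t ∈ Set.Ioc (T - δ) T → s ≠ t →
      |(1 - (∑ i, lam i ^ 2 * sig i s * sig i t * r i s t) /
            (Real.sqrt (∑ i, lam i ^ 2 * sig i s ^ 2) *
              Real.sqrt (∑ i, lam i ^ 2 * sig i t ^ 2))) / |t - s| ^ (⨅ j, alpha j)
          - (∑ i ∈ Finset.univ.filter fun i => alpha i = ⨅ j, alpha j,
              lam i ^ 2 * D i * sig i T ^ 2) / (∑ i, lam i ^ 2 * sig i T ^ 2)| ≤ ε :=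
  stmt10_general T hT n lam D alpha sig r hlam halpha hsig_pos hsig_smooth hr_lim
end

section
/- Let T > 0, δ ∈ (0,T), and let (X(t))_{t∈[δ,T]} be a family of centered square-integrable real random variables on a probability space with standard deviation function σ(t) = (E[X(t)²])^{1/2} satisfying σ(t) ≥ m for all t ∈ [δ,T], for some m > 0. Suppose E[(X(t)−X(s))²] ≤ C|t−s|^{γ} for all s,t ∈ [δ,T], for some constants C > 0 and γ > 0. Fix ε ∈ (0,1) and let σ̃ = σ(T). Define Y(t) = (X(t)/σ(t))·(1 − (1−ε)(σ̃ − σ(t))/σ̃) for t ∈ [δ,T]. Then for all s,t ∈ [δ,T]: E[(Y(t)−Y(s))²] ≤ (2ε²/m² + 2(1−ε)²/σ̃²)·C·|t−s|^{γ}. -/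
open MeasureTheory Set

/-!
Writing `Y(t) = ε X̄(t) + (1-ε) X(t)/σ̃`, the increment of `Y` is a combination of an increment
of the standardized process and one of `X`, so `(u+v)² ≤ 2u² + 2v²` reduces the claim to
`E[(X̄(t) - X̄(s))²] ≤ E[(X(t) - X(s))²]/m²`. This follows from the exact identity
`σ(t)σ(s) E[(X̄(t) - X̄(s))²] = E[(X(t) - X(s))²] - (σ(t) - σ(s))²`.
-/

section SquareIntegrable

variable {Ω : Type*} [MeasurableSpace Ω] {μ : Measure Ω} {f g : Ω → ℝ}

lemma integral_sq_add_le (hf : MemLp f 2 μ) (hg : MemLp g 2 μ) :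
    ∫ ω, (f ω + g ω) ^ 2 ∂μ ≤ 2 * ∫ ω, f ω ^ 2 ∂μ + 2 * ∫ ω, g ω ^ 2 ∂μ := by
  have hsum : Integrable (fun ω => 2 * (f ω ^ 2 + g ω ^ 2)) μ :=
    (hf.integrable_sq.add hg.integrable_sq).const_mul 2
  rw [← mul_add, ← integral_add hf.integrable_sq hg.integrable_sq, ← integral_const_mul]
  exact integral_mono_of_nonneg (ae_of_all _ fun _ => sq_nonneg _) hsum
    (ae_of_all _ fun _ => add_sq_le)

lemma integral_sq_mul_add_mul_le (α β : ℝ) (hf : MemLp f 2 μ) (hg : MemLp g 2 μ) :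
    ∫ ω, (α * f ω + β * g ω) ^ 2 ∂μ
      ≤ 2 * α ^ 2 * ∫ ω, f ω ^ 2 ∂μ + 2 * β ^ 2 * ∫ ω, g ω ^ 2 ∂μ := by
  refine (integral_sq_add_le (hf.const_mul α) (hg.const_mul β)).trans_eq ?_
  simp_rw [mul_pow, integral_const_mul, mul_assoc]

lemma mul_integral_sq_sub_div_eq {a b : ℝ} (hf : MemLp f 2 μ) (hg : MemLp g 2 μ)
    (ha : a ^ 2 = ∫ ω, f ω ^ 2 ∂μ) (hb : b ^ 2 = ∫ ω, g ω ^ 2 ∂μ) (ha0 : a ≠ 0) (hb0 : b ≠ 0) :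
    a * b * ∫ ω, (f ω / a - g ω / b) ^ 2 ∂μ = ∫ ω, (f ω - g ω) ^ 2 ∂μ - (a - b) ^ 2 := by
  have hpt : ∀ ω, a * b * (f ω / a - g ω / b) ^ 2
      = (f ω - g ω) ^ 2 - (a - b) * (b * f ω ^ 2 - a * g ω ^ 2) / (a * b) := by
    intro ω; field_simp; ring
  have hdiff : Integrable (fun ω => (a - b) * (b * f ω ^ 2 - a * g ω ^ 2) / (a * b)) μ :=
    (((hf.integrable_sq.const_mul b).sub (hg.integrable_sq.const_mul a)).const_mul _).div_const _
  have hsub : Integrable (fun ω => (f ω - g ω) ^ 2) μ := (hf.sub hg).integrable_sq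
  rw [← integral_const_mul]
  simp_rw [hpt]
  rw [integral_sub hsub hdiff, integral_div, integral_const_mul,
    integral_sub (hf.integrable_sq.const_mul b) (hg.integrable_sq.const_mul a),
    integral_const_mul, integral_const_mul, ← ha, ← hb]
  field_simp

lemma integral_sq_sub_div_le {a b : ℝ} (hf : MemLp f 2 μ) (hg : MemLp g 2 μ)
    (ha : a ^ 2 = ∫ ω, f ω ^ 2 ∂μ) (hb : b ^ 2 = ∫ ω, g ω ^ 2 ∂μ) (ha0 : 0 < a) (hb0 : 0 < b) :
    ∫ ω, (f ω / a - g ω / b) ^ 2 ∂μ ≤ (∫ ω, (f ω - g ω) ^ 2 ∂μ) / (a * b) := by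
  rw [le_div_iff₀ (mul_pos ha0 hb0), mul_comm,
    mul_integral_sq_sub_div_eq hf hg ha hb ha0.ne' hb0.ne']
  linarith [sq_nonneg (a - b)]

end SquareIntegrable

lemma div_mul_one_sub_sub_div {x a c : ℝ} (ε : ℝ) (ha : a ≠ 0) (hc : c ≠ 0) :
    x / a * (1 - (1 - ε) * (c - a) / c) = ε * (x / a) + (1 - ε) / c * x := by
  field_simp
  ring

theorem stmt12_general {Ω : Type*} [MeasurableSpace Ω] (P : Measure Ω)
    (T δ : ℝ) (hδT : δ < T)
    (X : ℝ → Ω → ℝ) (m C γ ε : ℝ) (hm : 0 < m)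
    (hL2 : ∀ t ∈ Set.Icc δ T, MemLp (X t) 2 P)
    (σ : ℝ → ℝ) (hσ : ∀ t, σ t = Real.sqrt (∫ ω, X t ω ^ 2 ∂P))
    (hσm : ∀ t ∈ Set.Icc δ T, m ≤ σ t)
    (hinc : ∀ s ∈ Set.Icc δ T, ∀ t ∈ Set.Icc δ T,
      ∫ ω, (X t ω - X s ω) ^ 2 ∂P ≤ C * |t - s| ^ γ)
    (Y : ℝ → Ω → ℝ)
    (hY : ∀ t ω, Y t ω = (X t ω / σ t) * (1 - (1 - ε) * (σ T - σ t) / σ T)) :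
    ∀ s ∈ Set.Icc δ T, ∀ t ∈ Set.Icc δ T,
      ∫ ω, (Y t ω - Y s ω) ^ 2 ∂P ≤
        (2 * ε ^ 2 / m ^ 2 + 2 * (1 - ε) ^ 2 / (σ T) ^ 2) * C * |t - s| ^ γ := by
  intro s hs t ht
  have hσpos : ∀ u ∈ Icc δ T, 0 < σ u := fun u hu => hm.trans_le (hσm u hu)
  have hσsq : ∀ u, σ u ^ 2 = ∫ ω, X u ω ^ 2 ∂P := fun u => by
    rw [hσ, Real.sq_sqrt (integral_nonneg fun ω => sq_nonneg _)]
  have hT := hσpos T ⟨hδT.le, le_rfl⟩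
  have hstd : ∫ ω, (X t ω / σ t - X s ω / σ s) ^ 2 ∂P ≤ (∫ ω, (X t ω - X s ω) ^ 2 ∂P) / m ^ 2 :=
    (integral_sq_sub_div_le (hL2 t ht) (hL2 s hs) (hσsq t) (hσsq s) (hσpos t ht) (hσpos s hs)).trans
      (div_le_div_of_nonneg_left (integral_nonneg fun _ => sq_nonneg _) (by positivity)
        (by nlinarith [hσm t ht, hσm s hs]))
  have hXstd : ∀ u ∈ Icc δ T, MemLp (fun ω => X u ω / σ u) 2 P := fun u hu => by
    simpa only [div_eq_mul_inv] using (hL2 u hu).mul_const (σ u)⁻¹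
  have hYinc : ∀ ω, Y t ω - Y s ω
      = ε * (X t ω / σ t - X s ω / σ s) + (1 - ε) / σ T * (X t ω - X s ω) := fun ω => by
    rw [hY, hY, div_mul_one_sub_sub_div ε (hσpos t ht).ne' hT.ne',
      div_mul_one_sub_sub_div ε (hσpos s hs).ne' hT.ne']
    ring
  simp_rw [hYinc]
  calc _ ≤ 2 * ε ^ 2 * ∫ ω, (X t ω / σ t - X s ω / σ s) ^ 2 ∂P
          + 2 * ((1 - ε) / σ T) ^ 2 * ∫ ω, (X t ω - X s ω) ^ 2 ∂P :=
        integral_sq_mul_add_mul_le _ _ ((hXstd t ht).sub (hXstd s hs)) ((hL2 t ht).sub (hL2 s hs))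
    _ ≤ 2 * ε ^ 2 * ((∫ ω, (X t ω - X s ω) ^ 2 ∂P) / m ^ 2)
          + 2 * ((1 - ε) / σ T) ^ 2 * ∫ ω, (X t ω - X s ω) ^ 2 ∂P := by
        gcongr
    _ = (2 * ε ^ 2 / m ^ 2 + 2 * (1 - ε) ^ 2 / (σ T) ^ 2) * ∫ ω, (X t ω - X s ω) ^ 2 ∂P := by
        ring
    _ ≤ _ := by
        rw [mul_assoc]
        gcongr
        exact hinc s hs t ht

/-- Hölder-type bound for the increments of the transformed process
`Y(t) = (X(t)/σ(t)) (1 - (1-ε)(σ(T) - σ(t))/σ(T))`. -/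
theorem stmt12 {Ω : Type*} [MeasurableSpace Ω] (P : Measure Ω) [IsProbabilityMeasure P]
    (T δ : ℝ) (hδ : 0 < δ) (hδT : δ < T)
    (X : ℝ → Ω → ℝ) (m C γ ε : ℝ) (hm : 0 < m) (hC : 0 < C) (hγ : 0 < γ)
    (hε : ε ∈ Set.Ioo (0:ℝ) 1)
    (hL2 : ∀ t ∈ Set.Icc δ T, MemLp (X t) 2 P)
    (hcent : ∀ t ∈ Set.Icc δ T, ∫ ω, X t ω ∂P = 0)
    (σ : ℝ → ℝ) (hσ : ∀ t, σ t = Real.sqrt (∫ ω, X t ω ^ 2 ∂P))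
    (hσm : ∀ t ∈ Set.Icc δ T, m ≤ σ t)
    (hinc : ∀ s ∈ Set.Icc δ T, ∀ t ∈ Set.Icc δ T,
      ∫ ω, (X t ω - X s ω) ^ 2 ∂P ≤ C * |t - s| ^ γ)
    (Y : ℝ → Ω → ℝ)
    (hY : ∀ t ω, Y t ω = (X t ω / σ t) * (1 - (1 - ε) * (σ T - σ t) / σ T)) :
    ∀ s ∈ Set.Icc δ T, ∀ t ∈ Set.Icc δ T,
      ∫ ω, (Y t ω - Y s ω) ^ 2 ∂P ≤
        (2 * ε ^ 2 / m ^ 2 + 2 * (1 - ε) ^ 2 / (σ T) ^ 2) * C * |t - s| ^ γ :=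
  stmt12_general P T δ hδT X m C γ ε hm hL2 σ hσ hσm hinc Y hY
end

section
/- Let T > 0, δ ∈ (0,T). Let σ : [δ,T] → (0,∞) satisfy σ(t) ≤ σ(T) for all t ∈ [δ,T], and let g : [δ,T] → ℝ be bounded and satisfy |g(T) − g(t)| ≤ M(σ(T) − σ(t)) for all t ∈ [δ,T], for some constant M > 0. For u ∈ ℝ define m_u(t) = (u + g(t))/σ(t). Then for every ε > 0 there exists u₀ > 0 such that for all u ≥ u₀ and all t ∈ [δ,T]: 1 − (1+ε)(σ(T)−σ(t))/σ(T) ≤ m_u(T)/m_u(t) ≤ 1 − (1−ε)(σ(T)−σ(t))/σ(T). -/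
open Filter Set

/-- Uniform two-sided bound for the ratio `m_u(T)/m_u(t)` of normalized
boundaries, for a standard deviation function `σ` attaining its maximum at `T` and a
bounded trend `g` with `|g(T) - g(t)| ≤ M (σ(T) - σ(t))`. -/
theorem stmt13 (T δ : ℝ) (hδ : 0 < δ) (hδT : δ < T)
    (σ g : ℝ → ℝ) (M : ℝ) (hM : 0 < M)
    (hσ_pos : ∀ t ∈ Set.Icc δ T, 0 < σ t)
    (hσ_max : ∀ t ∈ Set.Icc δ T, σ t ≤ σ T)
    (hg_bdd : ∃ B : ℝ, ∀ t ∈ Set.Icc δ T, |g t| ≤ B)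
    (hg : ∀ t ∈ Set.Icc δ T, |g T - g t| ≤ M * (σ T - σ t)) :
    ∀ ε > 0, ∃ u₀ > 0, ∀ u ≥ u₀, ∀ t ∈ Set.Icc δ T,
      1 - (1 + ε) * (σ T - σ t) / σ T ≤ ((u + g T) / σ T) / ((u + g t) / σ t) ∧
      ((u + g T) / σ T) / ((u + g t) / σ t) ≤ 1 - (1 - ε) * (σ T - σ t) / σ T := by
  obtain ⟨B, hB⟩ := hg_bdd
  intro ε hε
  have hTmem : T ∈ Set.Icc δ T := ⟨le_of_lt hδT, le_refl T⟩
  have hST : 0 < σ T := hσ_pos T hTmem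
  have hB0 : 0 ≤ B := le_trans (abs_nonneg _) (hB T hTmem)
  refine ⟨B + M * σ T / ε + 1, by positivity, ?_⟩
  intro u hu t ht
  have hst : 0 < σ t := hσ_pos t ht
  have hmax : σ t ≤ σ T := hσ_max t ht
  have hgt := hg t ht
  have habs := abs_le.1 hgt
  have hgtb := abs_le.1 (hB t ht)
  have hu' : M * σ T / ε + 1 ≤ u + g t := by linarith [hgtb.1]
  have hupos : 0 < u + g t := by
    have : (0:ℝ) < M * σ T / ε + 1 := by positivity
    linarith
  have heq : ε * (M * σ T / ε + 1) = M * σ T + ε := by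
    field_simp
  have h1 : M * σ t ≤ ε * (u + g t) := by
    have h2 : ε * (M * σ T / ε + 1) ≤ ε * (u + g t) :=
      mul_le_mul_of_nonneg_left hu' (le_of_lt hε)
    nlinarith
  have hD : 0 < σ T * (u + g t) := mul_pos hST hupos
  have hΔ : 0 ≤ σ T - σ t := by linarith
  have hrw : ((u + g T) / σ T) / ((u + g t) / σ t)
      = (u + g T) * σ t / (σ T * (u + g t)) := by
    field_simp
  have hA : σ T * (u + g t) - (1 + ε) * (σ T - σ t) * (u + g t) ≤ (u + g T) * σ t := by
    nlinarith [mul_nonneg hΔ (by linarith : (0:ℝ) ≤ ε * (u + g t) - M * σ t),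
      mul_nonneg (le_of_lt hst) (by linarith [habs.1] : (0:ℝ) ≤ g T - g t + M * (σ T - σ t))]
  have hA' : (u + g T) * σ t ≤ σ T * (u + g t) - (1 - ε) * (σ T - σ t) * (u + g t) := by
    nlinarith [mul_nonneg hΔ (by linarith : (0:ℝ) ≤ ε * (u + g t) - M * σ t),
      mul_nonneg (le_of_lt hst) (by linarith [habs.2] : (0:ℝ) ≤ M * (σ T - σ t) - (g T - g t))]
  constructor
  · rw [hrw, le_div_iff₀ hD]
    have expand : (1 - (1 + ε) * (σ T - σ t) / σ T) * (σ T * (u + g t))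
        = σ T * (u + g t) - (1 + ε) * (σ T - σ t) * (u + g t) := by
      field_simp
    rw [expand]
    exact hA
  · rw [hrw, div_le_iff₀ hD]
    have expand : (1 - (1 - ε) * (σ T - σ t) / σ T) * (σ T * (u + g t))
        = σ T * (u + g t) - (1 - ε) * (σ T - σ t) * (u + g t) := by
      field_simp
    rw [expand]
    exact hA'
end
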